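/- arXiv:1906.05054 — 4 statements merged into one kernel-verified Lean document; each statement's English description precedes it below -/
import Mathlib

section
/- For functions f, g, h on ℝ³ with f, ∂₁f, g, ∂₂g, h, ∂₃h all in L²(ℝ³), the integral ∫_{ℝ³} |f g h| dx is bounded by a universal constant times ‖f‖_{L²}^{1/2} ‖∂₁f‖_{L²}^{1/2} ‖g‖_{L²}^{1/2} ‖∂₂g‖_{L²}^{1/2} ‖h‖_{L²}^{1/2} ‖∂₃h‖_{L²}^{1/2}. In fact the constant 2^{3/2} suffices. -/
open MeasureTheory

/-- Partial derivative in the `i`-th coordinate direction on `ℝ³`. -/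
noncomputable def pd (i : Fin 3) (f : (Fin 3 → ℝ) → ℝ) : (Fin 3 → ℝ) → ℝ :=
  fun x => fderiv ℝ f x (Pi.single i 1)

/-- The `L²(ℝ³)` norm. -/
noncomputable def L2 (f : (Fin 3 → ℝ) → ℝ) : ℝ :=
  (eLpNorm f 2 volume).toReal

/-!
Along a line parallel to the `i`-th axis, `φ²` and its derivative `2 φ ∂ᵢφ` are integrable, so
`φ² → 0` at `+∞` and the fundamental theorem of calculus gives `|φ(x)|² ≤ 2 ∫ |φ ∂ᵢφ|` over the
line through `x`. Hence `|f g h|` is bounded pointwise by the product of the square roots of three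
functions, each independent of one coordinate. The Loomis–Whitney inequality (Cauchy–Schwarz in
one variable, then in the remaining two) bounds the integral of that product by the product of
the square roots of their integrals, and by Fubini and Cauchy–Schwarz the integral of
`∫ |φ ∂ᵢφ| dxᵢ` over the other two coordinates is at most `‖φ‖₂ ‖∂ᵢφ‖₂`.
-/

open Filter Topology Set
open scoped ENNReal

theorem lintegral_rpow_half_mul_rpow_half_le {α : Type*} [MeasurableSpace α] {μ : Measure α}
    {f g : α → ℝ≥0∞} (hf : AEMeasurable f μ) (hg : AEMeasurable g μ) :
    ∫⁻ a, f a ^ (1/2:ℝ) * g a ^ (1/2:ℝ) ∂μ ≤ (∫⁻ a, f a ∂μ) ^ (1/2:ℝ) * (∫⁻ a, g a ∂μ) ^ (1/2:ℝ) :=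
  ENNReal.lintegral_mul_norm_pow_le hf hg (by norm_num) (by norm_num) (by norm_num)

theorem lintegral_enorm_mul_enorm_le_eLpNorm_two_mul {α E F : Type*} [MeasurableSpace α]
    {μ : Measure α} [NormedAddCommGroup E] [NormedAddCommGroup F] {u : α → E} {v : α → F}
    (hu : AEStronglyMeasurable u μ) (hv : AEStronglyMeasurable v μ) :
    ∫⁻ x, ‖u x‖ₑ * ‖v x‖ₑ ∂μ ≤ eLpNorm u 2 μ * eLpNorm v 2 μ := by
  have h := lintegral_rpow_half_mul_rpow_half_le (hu.enorm.pow_const (2:ℝ))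
    (hv.enorm.pow_const (2:ℝ))
  simp only [← ENNReal.rpow_mul] at h
  rw [eLpNorm_eq_lintegral_rpow_enorm_toReal two_ne_zero ENNReal.ofNat_ne_top,
    eLpNorm_eq_lintegral_rpow_enorm_toReal two_ne_zero ENNReal.ofNat_ne_top]
  norm_num at h ⊢
  exact h

theorem enorm_sq_le_two_mul_lintegral_enorm_mul_deriv {u : ℝ → ℝ} (hu : Differentiable ℝ u)
    (hu2 : MemLp u 2 volume) (t : ℝ) :
    ‖u t‖ₑ ^ 2 ≤ 2 * ∫⁻ s, ‖u s‖ₑ * ‖deriv u s‖ₑ := by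
  by_cases hfin : ∫⁻ s, ‖u s‖ₑ * ‖deriv u s‖ₑ = ∞
  · simp [hfin]
  have hint : Integrable (fun s => 2 * (u s * deriv u s)) := by
    refine Integrable.const_mul ⟨?_, ?_⟩ 2
    · exact (hu.continuous.measurable.mul (measurable_deriv u)).aestronglyMeasurable
    · simpa [HasFiniteIntegral, enorm_mul] using lt_top_iff_ne_top.2 hfin
  have hder : ∀ s, HasDerivAt (fun s => u s ^ 2) (2 * (u s * deriv u s)) s := fun s =>
    ((hu s).hasDerivAt.fun_pow 2).congr_deriv (by push_cast; ring)
  have hlim : Tendsto (fun s => u s ^ 2) atTop (𝓝 0) :=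
    tendsto_zero_of_hasDerivAt_of_integrableOn_Ioi (a := t) (fun s _ => hder s) hint.integrableOn
      hu2.integrable_sq.integrableOn
  have hFTC : ∫ s in Ioi t, 2 * (u s * deriv u s) = 0 - u t ^ 2 :=
    integral_Ioi_of_hasDerivAt_of_tendsto' (fun s _ => hder s) hint.integrableOn hlim
  calc ‖u t‖ₑ ^ 2 = ‖∫ s in Ioi t, 2 * (u s * deriv u s)‖ₑ := by
        rw [hFTC, zero_sub, enorm_neg, enorm_pow]
    _ ≤ ∫⁻ s in Ioi t, ‖2 * (u s * deriv u s)‖ₑ := enorm_integral_le_lintegral_enorm _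
    _ ≤ ∫⁻ s, ‖2 * (u s * deriv u s)‖ₑ := setLIntegral_le_lintegral _ _
    _ = 2 * ∫⁻ s, ‖u s‖ₑ * ‖deriv u s‖ₑ := by
        simp only [enorm_mul]
        rw [lintegral_const_mul' _ _ (by simp), Real.enorm_of_nonneg zero_le_two,
          ENNReal.ofReal_ofNat]

theorem ae_enorm_sq_le_two_mul_lintegral_slice {β : Type*} [MeasurableSpace β] {ν : Measure β}
    [SFinite ν] {F : ℝ × β → ℝ} (hF : MemLp F 2 (volume.prod ν))
    (hd : ∀ b, Differentiable ℝ fun t => F (t, b)) :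
    ∀ᵐ p ∂(volume.prod ν),
      ‖F p‖ₑ ^ 2 ≤ 2 * ∫⁻ t, ‖F (t, p.2)‖ₑ * ‖deriv (fun s => F (s, p.2)) t‖ₑ := by
  have hslice : ∀ᵐ b ∂ν, MemLp (fun t => F (t, b)) 2 volume := by
    filter_upwards [hF.integrable_sq.prod_left_ae] with b hb
    exact (memLp_two_iff_integrable_sq (hd b).continuous.aestronglyMeasurable).2 hb
  filter_upwards [Measure.quasiMeasurePreserving_snd.ae hslice] with p hp
  exact enorm_sq_le_two_mul_lintegral_enorm_mul_deriv (hd p.2) hp p.1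

theorem Fin.hasDerivAt_insertNth {n : ℕ} (i : Fin (n + 1)) (y : Fin n → ℝ) (t : ℝ) :
    HasDerivAt (fun s => i.insertNth (α := fun _ => ℝ) s y) (Pi.single i 1) t := by
  convert hasDerivAt_update (i.insertNth t y) i t using 2 with s
  exact (Fin.update_insertNth ..).symm

section Lines

variable {n : ℕ}

noncomputable def lineLIntegral (i : Fin (n + 1)) (G : (Fin (n + 1) → ℝ) → ℝ≥0∞)
    (y : Fin n → ℝ) : ℝ≥0∞ :=
  ∫⁻ t, G (i.insertNth t y)

theorem measurable_lineLIntegral (i : Fin (n + 1)) {G : (Fin (n + 1) → ℝ) → ℝ≥0∞}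
    (hG : Measurable G) : Measurable (lineLIntegral i G) :=
  (hG.comp (MeasurableEquiv.piFinSuccAbove (fun _ => ℝ) i).symm.measurable).lintegral_prod_left'

theorem lintegral_lineLIntegral (i : Fin (n + 1)) {G : (Fin (n + 1) → ℝ) → ℝ≥0∞}
    (hG : Measurable G) : ∫⁻ y, lineLIntegral i G y = ∫⁻ x, G x := by
  have he := (volume_preserving_piFinSuccAbove (fun _ : Fin (n + 1) => ℝ) i).symm
  rw [← he.lintegral_comp_emb (MeasurableEquiv.measurableEmbedding _), Measure.volume_eq_prod]
  exact (lintegral_prod_symm _ (hG.comp (MeasurableEquiv.measurable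
    (MeasurableEquiv.piFinSuccAbove (fun _ => ℝ) i).symm)).aemeasurable).symm

variable {f : (Fin (n + 1) → ℝ) → ℝ}

theorem ae_enorm_sq_le_two_mul_lineLIntegral (i : Fin (n + 1)) (hf : Differentiable ℝ f)
    (hf2 : MemLp f 2 volume) :
    ∀ᵐ x, ‖f x‖ₑ ^ 2 ≤
      2 * lineLIntegral i (fun z => ‖f z‖ₑ * ‖fderiv ℝ f z (Pi.single i 1)‖ₑ) (i.removeNth x) := by
  have he := volume_preserving_piFinSuccAbove (fun _ : Fin (n + 1) => ℝ) i
  have hderiv : ∀ y t, HasDerivAt (fun s => f (i.insertNth s y))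
      (fderiv ℝ f (i.insertNth t y) (Pi.single i 1)) t := fun y t =>
    (hf _).hasFDerivAt.comp_hasDerivAt t (i.hasDerivAt_insertNth y t)
  have hslice := ae_enorm_sq_le_two_mul_lintegral_slice (hf2.comp_measurePreserving he.symm)
    fun y t => (hderiv y t).differentiableAt
  filter_upwards [he.quasiMeasurePreserving.ae hslice] with x hx
  rw [Function.comp_apply, MeasurableEquiv.symm_apply_apply] at hx
  change ‖f x‖ₑ ^ 2 ≤ 2 * ∫⁻ t, ‖f (i.insertNth t (i.removeNth x))‖ₑ *
    ‖deriv (fun s => f (i.insertNth s (i.removeNth x))) t‖ₑ at hx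
  simp only [(hderiv _ _).deriv] at hx
  exact hx

theorem lintegral_lineLIntegral_le_eLpNorm_mul (i : Fin (n + 1)) (hf : Differentiable ℝ f) :
    ∫⁻ y, lineLIntegral i (fun z => ‖f z‖ₑ * ‖fderiv ℝ f z (Pi.single i 1)‖ₑ) y ≤
      eLpNorm f 2 volume * eLpNorm (fun z => fderiv ℝ f z (Pi.single i 1)) 2 volume := by
  have hd : Measurable fun z => fderiv ℝ f z (Pi.single i 1) := measurable_fderiv_apply_const ℝ f _
  have hfm : Measurable f := hf.continuous.measurable
  rw [lintegral_lineLIntegral i (by fun_prop)]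
  exact lintegral_enorm_mul_enorm_le_eLpNorm_two_mul hf.continuous.aestronglyMeasurable
    hd.aestronglyMeasurable

end Lines

theorem lintegral_loomisWhitney {α β γ : Type*} [MeasurableSpace α] [MeasurableSpace β]
    [MeasurableSpace γ] {μ : Measure α} {ν : Measure β} {ρ : Measure γ} [SFinite μ] [SFinite ν]
    [SFinite ρ] {U : β × γ → ℝ≥0∞} {V : α × γ → ℝ≥0∞} {W : α × β → ℝ≥0∞}
    (hU : Measurable U) (hV : Measurable V) (hW : Measurable W) :
    ∫⁻ x, U x.2 ^ (1/2:ℝ) * V (x.1, x.2.2) ^ (1/2:ℝ) * W (x.1, x.2.1) ^ (1/2:ℝ) ∂μ.prod (ν.prod ρ)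
      ≤ (∫⁻ p, U p ∂ν.prod ρ) ^ (1/2:ℝ) * (∫⁻ p, V p ∂μ.prod ρ) ^ (1/2:ℝ) *
        (∫⁻ p, W p ∂μ.prod ν) ^ (1/2:ℝ) := by
  set A : γ → ℝ≥0∞ := fun c => ∫⁻ a, V (a, c) ∂μ
  set B : β → ℝ≥0∞ := fun b => ∫⁻ a, W (a, b) ∂μ
  have hA : Measurable A := hV.lintegral_prod_left'
  have hB : Measurable B := hW.lintegral_prod_left'
  have hAB : ∫⁻ p, B p.1 * A p.2 ∂ν.prod ρ = (∫⁻ p, W p ∂μ.prod ν) * ∫⁻ p, V p ∂μ.prod ρ := by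
    rw [lintegral_prod_mul hB.aemeasurable hA.aemeasurable, lintegral_prod_symm _ hV.aemeasurable,
      lintegral_prod_symm _ hW.aemeasurable]
  calc _ = ∫⁻ p, U p ^ (1/2:ℝ) * ∫⁻ a, V (a, p.2) ^ (1/2:ℝ) * W (a, p.1) ^ (1/2:ℝ) ∂μ ∂ν.prod ρ := by
        rw [lintegral_prod_symm _ (by fun_prop)]
        refine lintegral_congr fun p => ?_
        rw [← lintegral_const_mul _ (by fun_prop)]
        simp only [mul_assoc]
    _ ≤ ∫⁻ p, U p ^ (1/2:ℝ) * (B p.1 * A p.2) ^ (1/2:ℝ) ∂ν.prod ρ := by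
        gcongr with p
        rw [ENNReal.mul_rpow_of_nonneg _ _ (by norm_num), mul_comm (B p.1 ^ _)]
        exact lintegral_rpow_half_mul_rpow_half_le (by fun_prop) (by fun_prop)
    _ ≤ (∫⁻ p, U p ∂ν.prod ρ) ^ (1/2:ℝ) * (∫⁻ p, B p.1 * A p.2 ∂ν.prod ρ) ^ (1/2:ℝ) :=
        lintegral_rpow_half_mul_rpow_half_le hU.aemeasurable (by fun_prop)
    _ = _ := by
        rw [hAB, ENNReal.mul_rpow_of_nonneg _ _ (by norm_num)]
        ring

theorem lintegral_loomisWhitney_fin_three {U V W : (Fin 2 → ℝ) → ℝ≥0∞} (hU : Measurable U)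
    (hV : Measurable V) (hW : Measurable W) :
    ∫⁻ x : Fin 3 → ℝ, U (Fin.removeNth 0 x) ^ (1/2:ℝ) * V (Fin.removeNth 1 x) ^ (1/2:ℝ) *
        W (Fin.removeNth 2 x) ^ (1/2:ℝ)
      ≤ (∫⁻ y, U y) ^ (1/2:ℝ) * (∫⁻ y, V y) ^ (1/2:ℝ) * (∫⁻ y, W y) ^ (1/2:ℝ) := by
  let e : ℝ × ℝ × ℝ ≃ᵐ (Fin 3 → ℝ) :=
    ((MeasurableEquiv.refl ℝ).prodCongr MeasurableEquiv.finTwoArrow.symm).trans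
      (MeasurableEquiv.piFinSuccAbove (fun _ => ℝ) 0).symm
  have he : MeasurePreserving e volume volume :=
    (volume_preserving_piFinSuccAbove (fun _ => ℝ) 0).symm.comp
      ((MeasurePreserving.id volume).prod (volume_preserving_finTwoArrow ℝ).symm)
  have hpair : ∀ {F : (Fin 2 → ℝ) → ℝ≥0∞}, Measurable F →
      ∫⁻ p : ℝ × ℝ, F ![p.1, p.2] = ∫⁻ y, F y := fun hF =>
    (volume_preserving_finTwoArrow ℝ).symm.lintegral_comp hF
  have hcoord : ∀ p : ℝ × ℝ × ℝ, Fin.removeNth 0 (e p) = ![p.2.1, p.2.2] ∧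
      Fin.removeNth 1 (e p) = ![p.1, p.2.2] ∧ Fin.removeNth 2 (e p) = ![p.1, p.2.1] := fun p => by
    refine ⟨?_, ?_, ?_⟩ <;> funext j <;> fin_cases j <;> rfl
  calc _ = ∫⁻ p : ℝ × ℝ × ℝ, U ![p.2.1, p.2.2] ^ (1/2:ℝ) * V ![p.1, p.2.2] ^ (1/2:ℝ) *
        W ![p.1, p.2.1] ^ (1/2:ℝ) := by
        rw [← he.lintegral_comp_emb e.measurableEmbedding]
        simp only [hcoord]
    _ ≤ _ := lintegral_loomisWhitney (U := fun p => U ![p.1, p.2]) (V := fun p => V ![p.1, p.2])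
        (W := fun p => W ![p.1, p.2]) (by fun_prop) (by fun_prop) (by fun_prop)
    _ = _ := by rw [← Measure.volume_eq_prod, hpair hU, hpair hV, hpair hW]

theorem lintegral_enorm_mul_mul_le {f g h : (Fin 3 → ℝ) → ℝ} (hfd : Differentiable ℝ f)
    (hgd : Differentiable ℝ g) (hhd : Differentiable ℝ h) (hf : MemLp f 2 volume)
    (hg : MemLp g 2 volume) (hh : MemLp h 2 volume) :
    ∫⁻ x, ‖f x * g x * h x‖ₑ ≤
      (2 * (eLpNorm f 2 volume * eLpNorm (pd 0 f) 2 volume)) ^ (1/2:ℝ) *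
      (2 * (eLpNorm g 2 volume * eLpNorm (pd 1 g) 2 volume)) ^ (1/2:ℝ) *
      (2 * (eLpNorm h 2 volume * eLpNorm (pd 2 h) 2 volume)) ^ (1/2:ℝ) := by
  have hsqrt : ∀ {a b : ℝ≥0∞}, a ^ 2 ≤ b → a ≤ b ^ (1/2:ℝ) := fun hab => by
    rwa [one_div, ENNReal.le_rpow_inv_iff two_pos, ENNReal.rpow_two]
  have hG : ∀ (i : Fin 3) φ, Differentiable ℝ φ → Measurable fun z => ‖φ z‖ₑ * ‖pd i φ z‖ₑ :=
    fun i φ hφ => hφ.continuous.measurable.enorm.mul (measurable_fderiv_apply_const ℝ φ _).enorm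
  have hM : ∀ (i : Fin 3) φ, Differentiable ℝ φ →
      Measurable fun y => 2 * lineLIntegral i (fun z => ‖φ z‖ₑ * ‖pd i φ z‖ₑ) y :=
    fun i φ hφ => (measurable_lineLIntegral i (hG i φ hφ)).const_mul 2
  have hL : ∀ (i : Fin 3) φ, Differentiable ℝ φ →
      ∫⁻ y, 2 * lineLIntegral i (fun z => ‖φ z‖ₑ * ‖pd i φ z‖ₑ) y ≤
        2 * (eLpNorm φ 2 volume * eLpNorm (pd i φ) 2 volume) := fun i φ hφ => by
    rw [lintegral_const_mul _ (measurable_lineLIntegral i (hG i φ hφ))]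
    gcongr
    exact lintegral_lineLIntegral_le_eLpNorm_mul i hφ
  refine (lintegral_mono_ae ?_).trans ((lintegral_loomisWhitney_fin_three
    (hM 0 f hfd) (hM 1 g hgd) (hM 2 h hhd)).trans ?_)
  · filter_upwards [ae_enorm_sq_le_two_mul_lineLIntegral 0 hfd hf,
      ae_enorm_sq_le_two_mul_lineLIntegral 1 hgd hg,
      ae_enorm_sq_le_two_mul_lineLIntegral 2 hhd hh] with x hfx hgx hhx
    rw [enorm_mul, enorm_mul]
    gcongr <;> exact hsqrt ‹_›
  · gcongr <;> exact hL _ _ ‹_›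

/-- Anisotropic trilinear estimate:
`∫ |f g h| ≤ 2^{3/2} ‖f‖^{1/2}‖∂₁f‖^{1/2}‖g‖^{1/2}‖∂₂g‖^{1/2}‖h‖^{1/2}‖∂₃h‖^{1/2}`. -/
theorem anisotropic_trilinear (f g h : (Fin 3 → ℝ) → ℝ)
    (hfd : Differentiable ℝ f) (hgd : Differentiable ℝ g) (hhd : Differentiable ℝ h)
    (hf : MemLp f 2 volume) (hf1 : MemLp (pd 0 f) 2 volume)
    (hg : MemLp g 2 volume) (hg2 : MemLp (pd 1 g) 2 volume)
    (hh : MemLp h 2 volume) (hh3 : MemLp (pd 2 h) 2 volume) :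
    ∫ x, |f x * g x * h x| ≤
      (2 : ℝ) ^ ((3 : ℝ)/2) * L2 f ^ ((1:ℝ)/2) * L2 (pd 0 f) ^ ((1:ℝ)/2) *
        L2 g ^ ((1:ℝ)/2) * L2 (pd 1 g) ^ ((1:ℝ)/2) *
        L2 h ^ ((1:ℝ)/2) * L2 (pd 2 h) ^ ((1:ℝ)/2) := by
  have hfinite : ∀ {φ ψ : (Fin 3 → ℝ) → ℝ}, MemLp φ 2 volume → MemLp ψ 2 volume →
      (2 * (eLpNorm φ 2 volume * eLpNorm ψ 2 volume)) ^ (1/2:ℝ) ≠ ∞ := fun hφ hψ => by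
    have := hφ.eLpNorm_ne_top
    have := hψ.eLpNorm_ne_top
    finiteness
  have hbound := ENNReal.toReal_mono (ENNReal.mul_ne_top (ENNReal.mul_ne_top
    (hfinite hf hf1) (hfinite hg hg2)) (hfinite hh hh3))
    (lintegral_enorm_mul_mul_le hfd hgd hhd hf hg hh)
  have hmeas : AEStronglyMeasurable (fun x => f x * g x * h x) volume :=
    ((hfd.continuous.mul hgd.continuous).mul hhd.continuous).aestronglyMeasurable
  rw [← integral_norm_eq_lintegral_enorm hmeas] at hbound
  simp only [Real.norm_eq_abs, ENNReal.toReal_mul, ← ENNReal.toReal_rpow,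
    ENNReal.toReal_ofNat] at hbound
  refine hbound.trans_eq ?_
  have h2 : (2:ℝ) ^ ((3:ℝ)/2) = 2 ^ (1/2:ℝ) * 2 ^ (1/2:ℝ) * 2 ^ (1/2:ℝ) := by
    rw [← Real.rpow_add two_pos, ← Real.rpow_add two_pos]
    norm_num
  simp only [L2, h2, ENNReal.toReal_nonneg, zero_le_two, mul_nonneg, Real.mul_rpow]
  ring
end

section
/- For functions f, g, h, v on ℝ³, the integral ∫_{ℝ³} |f g h v| dx is bounded by a universal constant times ‖f‖_{L²}^{1/4} ‖∂₁f‖_{L²}^{1/4} ‖∂₂f‖_{L²}^{1/4} ‖∂₁∂₂f‖_{L²}^{1/4} · ‖g‖_{L²}^{1/4} ‖∂₁g‖_{L²}^{1/4} ‖∂₂g‖_{L²}^{1/4} ‖∂₁∂₂g‖_{L²}^{1/4} · ‖h‖_{L²}^{1/2} ‖∂₃h‖_{L²}^{1/2} · ‖v‖_{L²}^{1/2} ‖∂₃v‖_{L²}^{1/2}, whenever all norms on the right are finite. -/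
/-!
The one-dimensional Agmon inequality `sup |u|² ≤ 2 ∫ |u| |u'|` for `u ∈ L²(ℝ)` (integrate
`(u²)' = 2 u u'` from a point where `u²` is small) drives everything. Along vertical lines it
gives `sup_c |h|² ≤ 2 ∫ |h| |∂₃h| dc`, so by Cauchy–Schwarz in the horizontal variables
`∫∫ |h v| (·, ·, c)` is bounded by `2 (∫ |h| |∂₃h|)^{1/2} (∫ |v| |∂₃v|)^{1/2}` uniformly in `c`.
In a horizontal plane, applying it along `x₂` to `f` and then along `x₁` to `f` and `∂₂f` gives
`sup |f|⁴ ≤ 16 ∫∫ |f| |∂₁f| · ∫∫ |∂₂f| |∂₁∂₂f|`. Hence `∫ |f g h v|` is at most the uniform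
vertical bound times `∫ sup |f| sup |g| dc`, and two more Cauchy–Schwarz inequalities in `c`
finish. All of this is done with fourth powers in `ℝ≥0∞`; the only roots are taken at the end.
Coordinates are indexed from `0`, so `∂₁ = pd 0`, `∂₂ = pd 1`, `∂₃ = pd 2`.
-/

open MeasureTheory

open scoped ENNReal

section General

variable {α β : Type*} [MeasurableSpace α] [MeasurableSpace β] {μ : Measure α} {ν : Measure β}

theorem sq_lintegral_le_mul_of_sq_le {H A B : α → ℝ≥0∞} (hA : AEMeasurable A μ)
    (hB : AEMeasurable B μ) (h : ∀ᵐ x ∂μ, H x ^ 2 ≤ A x * B x) :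
    (∫⁻ x, H x ∂μ) ^ 2 ≤ (∫⁻ x, A x ∂μ) * ∫⁻ x, B x ∂μ := by
  have hsqrt : ∀ z : ℝ≥0∞, (z ^ (1 / 2 : ℝ)) ^ 2 = z := fun z => by
    rw [← ENNReal.rpow_natCast, ← ENNReal.rpow_mul]; norm_num
  have hH : ∀ᵐ x ∂μ, H x ≤ A x ^ (1 / 2 : ℝ) * B x ^ (1 / 2 : ℝ) := by
    filter_upwards [h] with x hx
    rw [← ENNReal.pow_le_pow_left_iff two_ne_zero, mul_pow, hsqrt, hsqrt]
    exact hx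
  calc (∫⁻ x, H x ∂μ) ^ 2
      ≤ (∫⁻ x, A x ^ (1 / 2 : ℝ) * B x ^ (1 / 2 : ℝ) ∂μ) ^ 2 := by
        gcongr ?_ ^ 2
        exact lintegral_mono_ae hH
    _ ≤ ((∫⁻ x, A x ∂μ) ^ (1 / 2 : ℝ) * (∫⁻ x, B x ∂μ) ^ (1 / 2 : ℝ)) ^ 2 := by
        gcongr
        exact ENNReal.lintegral_mul_norm_pow_le hA hB (by norm_num) (by norm_num) (by norm_num)
    _ = (∫⁻ x, A x ∂μ) * ∫⁻ x, B x ∂μ := by rw [mul_pow, hsqrt, hsqrt]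

theorem lintegral_enorm_mul_le_eLpNorm_mul_eLpNorm {u w : α → ℝ} (hu : AEStronglyMeasurable u μ)
    (hw : AEStronglyMeasurable w μ) :
    ∫⁻ x, ‖u x‖ₑ * ‖w x‖ₑ ∂μ ≤ eLpNorm u 2 μ * eLpNorm w 2 μ := by
  have := eLpNorm_le_eLpNorm_mul_eLpNorm_of_nnnorm (p := 2) (q := 2) (r := 1) hu hw (· * ·) 1
    (Filter.Eventually.of_forall fun x => by simp [nnnorm_mul])
  simpa [eLpNorm_one_eq_lintegral_enorm, enorm_mul] using this

theorem MeasureTheory.MemLp.lintegral_enorm_sq_ne_top {u : α → ℝ} (hu : MemLp u 2 μ) :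
    ∫⁻ x, ‖u x‖ₑ ^ 2 ∂μ ≠ ∞ := by
  simpa using (lintegral_rpow_enorm_lt_top_of_eLpNorm_lt_top two_ne_zero ENNReal.ofNat_ne_top
    hu.eLpNorm_lt_top).ne

theorem ae_lintegral_prod_mk_left_ne_top [SFinite ν] {f : α × β → ℝ≥0∞} (hf : Measurable f)
    (h : ∫⁻ p, f p ∂μ.prod ν ≠ ∞) : ∀ᵐ x ∂μ, ∫⁻ y, f (x, y) ∂ν ≠ ∞ := by
  rw [lintegral_prod _ hf.aemeasurable] at h
  exact (ae_lt_top hf.lintegral_prod_right' h).mono fun _ => LT.lt.ne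

theorem ae_lintegral_prod_mk_right_ne_top [SFinite μ] [SFinite ν] {f : α × β → ℝ≥0∞}
    (hf : Measurable f) (h : ∫⁻ p, f p ∂μ.prod ν ≠ ∞) : ∀ᵐ y ∂ν, ∫⁻ x, f (x, y) ∂μ ≠ ∞ := by
  rw [lintegral_prod_symm _ hf.aemeasurable] at h
  exact (ae_lt_top hf.lintegral_prod_left' h).mono fun _ => LT.lt.ne

theorem forall_of_ae_of_isClosed [TopologicalSpace α] [μ.IsOpenPosMeasure] {p : α → Prop}
    (hp : IsClosed {x | p x}) (h : ∀ᵐ x ∂μ, p x) (x : α) : p x :=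
  Set.eq_univ_iff_forall.1 (hp.ae_eq_univ_iff_eq.1 (ae_eq_univ.2 h)) x

end General

theorem enorm_sq_le_enorm_sq_add_two_mul_lintegral {u u' : ℝ → ℝ}
    (hu : ∀ t, HasDerivAt u (u' t) t) (hu' : Continuous u') (x s : ℝ) :
    ‖u x‖ₑ ^ 2 ≤ ‖u s‖ₑ ^ 2 + 2 * ∫⁻ t, ‖u t‖ₑ * ‖u' t‖ₑ := by
  have hcont : Continuous u := continuous_iff_continuousAt.2 fun t => (hu t).continuousAt
  have ftc : ∫ t in s..x, 2 * (u t * u' t) = u x ^ 2 - u s ^ 2 :=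
    intervalIntegral.integral_eq_sub_of_hasDerivAt
      (fun t _ => ((hu t).pow 2).congr_deriv (by ring))
      ((continuous_const.mul (hcont.mul hu')).intervalIntegrable _ _)
  have hI : ‖∫ t in s..x, 2 * (u t * u' t)‖ₑ ≤ 2 * ∫⁻ t, ‖u t‖ₑ * ‖u' t‖ₑ := calc
    ‖∫ t in s..x, 2 * (u t * u' t)‖ₑ = ‖∫ t in Set.uIoc s x, 2 * (u t * u' t)‖ₑ := by
      simp only [Real.enorm_eq_ofReal_abs, intervalIntegral.abs_integral_eq_abs_integral_uIoc]
    _ ≤ ∫⁻ t in Set.uIoc s x, ‖2 * (u t * u' t)‖ₑ := enorm_integral_le_lintegral_enorm _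
    _ ≤ ∫⁻ t, ‖2 * (u t * u' t)‖ₑ := setLIntegral_le_lintegral _ _
    _ = 2 * ∫⁻ t, ‖u t‖ₑ * ‖u' t‖ₑ := by
      simp [enorm_mul, lintegral_const_mul', Real.enorm_eq_ofReal]
  calc ‖u x‖ₑ ^ 2 = ‖u s ^ 2 + ∫ t in s..x, 2 * (u t * u' t)‖ₑ := by
        rw [ftc, add_sub_cancel, enorm_pow]
    _ ≤ ‖u s‖ₑ ^ 2 + 2 * ∫⁻ t, ‖u t‖ₑ * ‖u' t‖ₑ := by
        grw [enorm_add_le, enorm_pow, hI]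

theorem enorm_sq_le_two_mul_lintegral_enorm_mul_deriv_s2 {u u' : ℝ → ℝ}
    (hu : ∀ t, HasDerivAt u (u' t) t) (hu' : Continuous u')
    (hL2 : ∫⁻ t, ‖u t‖ₑ ^ 2 ≠ ∞) (x : ℝ) :
    ‖u x‖ₑ ^ 2 ≤ 2 * ∫⁻ t, ‖u t‖ₑ * ‖u' t‖ₑ := by
  -- Otherwise `‖u‖ₑ ^ 2` would be bounded below by a positive constant on all of `ℝ`.
  by_contra! hlt
  have hgap : ∀ s, ‖u x‖ₑ ^ 2 - 2 * ∫⁻ t, ‖u t‖ₑ * ‖u' t‖ₑ ≤ ‖u s‖ₑ ^ 2 := fun s =>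
    tsub_le_iff_right.2 (enorm_sq_le_enorm_sq_add_two_mul_lintegral hu hu' x s)
  have := lintegral_mono (μ := volume) hgap
  rw [lintegral_const, Real.volume_univ, ENNReal.mul_top (tsub_pos_of_lt hlt).ne'] at this
  exact hL2 (top_le_iff.1 this)

theorem sq_lintegral_slice_enorm_mul_le {F F' G G' : ℝ × ℝ → ℝ}
    (hF : Continuous F) (hF' : Continuous F') (hG : Continuous G) (hG' : Continuous G')
    (dF : ∀ a b, HasDerivAt (fun t => F (t, b)) (F' (a, b)) a)
    (dG : ∀ a b, HasDerivAt (fun t => G (t, b)) (G' (a, b)) a)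
    (hFL2 : ∫⁻ p, ‖F p‖ₑ ^ 2 ≠ ∞) (hGL2 : ∫⁻ p, ‖G p‖ₑ ^ 2 ≠ ∞) (a : ℝ) :
    (∫⁻ s, ‖F (a, s)‖ₑ * ‖G (a, s)‖ₑ) ^ 2 ≤
      (2 * ∫⁻ p, ‖F p‖ₑ * ‖F' p‖ₑ) * (2 * ∫⁻ p, ‖G p‖ₑ * ‖G' p‖ₑ) := by
  set X : ℝ → ℝ≥0∞ := fun s => ∫⁻ t, ‖F (t, s)‖ₑ * ‖F' (t, s)‖ₑ
  set Y : ℝ → ℝ≥0∞ := fun s => ∫⁻ t, ‖G (t, s)‖ₑ * ‖G' (t, s)‖ₑ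
  have hX : Measurable X :=
    Measurable.lintegral_prod_left' (f := fun p => ‖F p‖ₑ * ‖F' p‖ₑ) (by fun_prop)
  have hY : Measurable Y :=
    Measurable.lintegral_prod_left' (f := fun p => ‖G p‖ₑ * ‖G' p‖ₑ) (by fun_prop)
  have hlines : ∀ᵐ s, ‖F (a, s)‖ₑ ^ 2 ≤ 2 * X s ∧ ‖G (a, s)‖ₑ ^ 2 ≤ 2 * Y s := by
    filter_upwards [ae_lintegral_prod_mk_right_ne_top (by fun_prop) hFL2,
      ae_lintegral_prod_mk_right_ne_top (by fun_prop) hGL2] with s hFs hGs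
    exact ⟨enorm_sq_le_two_mul_lintegral_enorm_mul_deriv_s2 (fun t => dF t s) (by fun_prop) hFs a,
      enorm_sq_le_two_mul_lintegral_enorm_mul_deriv_s2 (fun t => dG t s) (by fun_prop) hGs a⟩
  have := sq_lintegral_le_mul_of_sq_le (hX.const_mul 2).aemeasurable
    (hY.const_mul 2).aemeasurable (hlines.mono fun s hs => by
      rw [mul_pow]; exact mul_le_mul' hs.1 hs.2)
  rw [lintegral_const_mul _ hX, lintegral_const_mul _ hY] at this
  rwa [Measure.volume_eq_prod, lintegral_prod_symm _ (by fun_prop),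
    lintegral_prod_symm _ (by fun_prop)]

theorem iSup_enorm_pow_four_le {F F₁ F₂ F₁₂ : ℝ × ℝ → ℝ}
    (hF : Continuous F) (hF₁ : Continuous F₁) (hF₂ : Continuous F₂) (hF₁₂ : Continuous F₁₂)
    (dF₁ : ∀ a b, HasDerivAt (fun t => F (t, b)) (F₁ (a, b)) a)
    (dF₂ : ∀ a b, HasDerivAt (fun t => F (a, t)) (F₂ (a, b)) b)
    (dF₁₂ : ∀ a b, HasDerivAt (fun t => F₂ (t, b)) (F₁₂ (a, b)) a)
    (hFL2 : ∫⁻ p, ‖F p‖ₑ ^ 2 ≠ ∞) (hF₂L2 : ∫⁻ p, ‖F₂ p‖ₑ ^ 2 ≠ ∞) :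
    (⨆ p, ‖F p‖ₑ) ^ 4 ≤ 16 * (∫⁻ p, ‖F p‖ₑ * ‖F₁ p‖ₑ) * ∫⁻ p, ‖F₂ p‖ₑ * ‖F₁₂ p‖ₑ := by
  have hpoint : ∀ᵐ a, ∀ b, ‖F (a, b)‖ₑ ^ 4 ≤
      16 * (∫⁻ p, ‖F p‖ₑ * ‖F₁ p‖ₑ) * ∫⁻ p, ‖F₂ p‖ₑ * ‖F₁₂ p‖ₑ := by
    filter_upwards [ae_lintegral_prod_mk_left_ne_top (by fun_prop) hFL2] with a ha b
    calc ‖F (a, b)‖ₑ ^ 4 = (‖F (a, b)‖ₑ ^ 2) ^ 2 := by ring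
      _ ≤ (2 * ∫⁻ s, ‖F (a, s)‖ₑ * ‖F₂ (a, s)‖ₑ) ^ 2 := by
        gcongr
        exact enorm_sq_le_two_mul_lintegral_enorm_mul_deriv_s2 (dF₂ a) (by fun_prop) ha b
      _ = 4 * (∫⁻ s, ‖F (a, s)‖ₑ * ‖F₂ (a, s)‖ₑ) ^ 2 := by ring
      _ ≤ 4 * ((2 * ∫⁻ p, ‖F p‖ₑ * ‖F₁ p‖ₑ) * (2 * ∫⁻ p, ‖F₂ p‖ₑ * ‖F₁₂ p‖ₑ)) := by
        gcongr
        exact sq_lintegral_slice_enorm_mul_le hF hF₁ hF₂ hF₁₂ dF₁ dF₁₂ hFL2 hF₂L2 a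
      _ = _ := by ring
  rw [ENNReal.iSup_pow]
  refine iSup_le fun p => forall_of_ae_of_isClosed (μ := volume) ?_ hpoint p.1 p.2
  simp only [Set.ofPred_forall]
  exact isClosed_iInter fun b => isClosed_le (by fun_prop) continuous_const

def splitVertical : (Fin 3 → ℝ) ≃ᵐ (ℝ × ℝ) × ℝ :=
  ((MeasurableEquiv.piFinSuccAbove (fun _ => ℝ) 0).trans
    ((MeasurableEquiv.refl ℝ).prodCongr MeasurableEquiv.finTwoArrow)).trans
    MeasurableEquiv.prodAssoc.symm

theorem splitVertical_apply (x : Fin 3 → ℝ) : splitVertical x = ((x 0, x 1), x 2) := rfl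

theorem splitVertical_symm_apply (p : ℝ × ℝ) (c : ℝ) :
    splitVertical.symm (p, c) = ![p.1, p.2, c] :=
  splitVertical.symm_apply_eq.2 (by simp [splitVertical_apply])

theorem measurePreserving_splitVertical : MeasurePreserving splitVertical volume volume :=
  ((measurePreserving_piFinSuccAbove (fun _ => (volume : Measure ℝ)) 0).trans
    ((MeasurePreserving.id volume).prod (volume_preserving_finTwoArrow ℝ))).trans
    (measurePreserving_prodAssoc volume volume volume).symm

theorem lintegral_eq_lintegral_plane_lintegral_vertical {G : (Fin 3 → ℝ) → ℝ≥0∞}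
    (hG : Measurable G) : ∫⁻ x, G x = ∫⁻ p : ℝ × ℝ, ∫⁻ c, G ![p.1, p.2, c] := by
  rw [← (measurePreserving_splitVertical.symm _).lintegral_comp_emb
    splitVertical.symm.measurableEmbedding, Measure.volume_eq_prod]
  simpa only [Function.comp_apply, splitVertical_symm_apply] using
    lintegral_prod _ (hG.comp splitVertical.symm.measurable).aemeasurable

theorem lintegral_eq_lintegral_vertical_lintegral_plane {G : (Fin 3 → ℝ) → ℝ≥0∞}
    (hG : Measurable G) : ∫⁻ x, G x = ∫⁻ c, ∫⁻ p : ℝ × ℝ, G ![p.1, p.2, c] := by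
  rw [← (measurePreserving_splitVertical.symm _).lintegral_comp_emb
    splitVertical.symm.measurableEmbedding, Measure.volume_eq_prod]
  simpa only [Function.comp_apply, splitVertical_symm_apply] using
    lintegral_prod_symm _ (hG.comp splitVertical.symm.measurable).aemeasurable

section Slices

variable {G : (Fin 3 → ℝ) → ℝ≥0∞}

theorem measurable_lintegral_plane (hG : Measurable G) :
    Measurable fun c => ∫⁻ p : ℝ × ℝ, G ![p.1, p.2, c] :=
  Measurable.lintegral_prod_left' (f := fun q : (ℝ × ℝ) × ℝ => G ![q.1.1, q.1.2, q.2])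
    (hG.comp (by fun_prop))

theorem measurable_lintegral_vertical (hG : Measurable G) :
    Measurable fun p : ℝ × ℝ => ∫⁻ c, G ![p.1, p.2, c] :=
  Measurable.lintegral_prod_right' (f := fun q : (ℝ × ℝ) × ℝ => G ![q.1.1, q.1.2, q.2])
    (hG.comp (by fun_prop))

theorem ae_lintegral_plane_ne_top (hG : Measurable G) (h : ∫⁻ x, G x ≠ ∞) :
    ∀ᵐ c, ∫⁻ p : ℝ × ℝ, G ![p.1, p.2, c] ≠ ∞ := by
  rw [lintegral_eq_lintegral_vertical_lintegral_plane hG] at h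
  exact (ae_lt_top (measurable_lintegral_plane hG) h).mono fun _ => LT.lt.ne

theorem ae_lintegral_vertical_ne_top (hG : Measurable G) (h : ∫⁻ x, G x ≠ ∞) :
    ∀ᵐ p : ℝ × ℝ, ∫⁻ c, G ![p.1, p.2, c] ≠ ∞ := by
  rw [lintegral_eq_lintegral_plane_lintegral_vertical hG] at h
  exact (ae_lt_top (measurable_lintegral_vertical hG) h).mono fun _ => LT.lt.ne

end Slices

theorem contDiff_pd {m n : WithTop ℕ∞} {f : (Fin 3 → ℝ) → ℝ} (hf : ContDiff ℝ n f)
    (hmn : m + 1 ≤ n) (i : Fin 3) : ContDiff ℝ m (pd i f) :=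
  (hf.fderiv_right hmn).clm_apply contDiff_const

theorem continuous_pd {n : WithTop ℕ∞} {f : (Fin 3 → ℝ) → ℝ} (hf : ContDiff ℝ n f) (hn : n ≠ 0)
    (i : Fin 3) : Continuous (pd i f) :=
  (hf.continuous_fderiv hn).clm_apply continuous_const

theorem HasDerivAt.comp_pd {f : (Fin 3 → ℝ) → ℝ} (hf : Differentiable ℝ f) {γ : ℝ → Fin 3 → ℝ}
    {i : Fin 3} {t : ℝ} (hγ : HasDerivAt γ (Pi.single i 1) t) :
    HasDerivAt (fun s => f (γ s)) (pd i f (γ t)) t :=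
  (hf (γ t)).hasFDerivAt.comp_hasDerivAt t hγ

theorem hasDerivAt_vec₀ (b c t : ℝ) : HasDerivAt (fun s => ![s, b, c]) (Pi.single 0 1) t := by
  rw [hasDerivAt_pi]; intro i; fin_cases i <;> simp [hasDerivAt_const, hasDerivAt_id']

theorem hasDerivAt_vec₁ (a c t : ℝ) : HasDerivAt (fun s => ![a, s, c]) (Pi.single 1 1) t := by
  rw [hasDerivAt_pi]; intro i; fin_cases i <;> simp [hasDerivAt_const, hasDerivAt_id']

theorem hasDerivAt_vec₂ (a b t : ℝ) : HasDerivAt (fun s => ![a, b, s]) (Pi.single 2 1) t := by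
  rw [hasDerivAt_pi]; intro i; fin_cases i <;> simp [hasDerivAt_const, hasDerivAt_id']

noncomputable def planeSup (u : (Fin 3 → ℝ) → ℝ) (c : ℝ) : ℝ≥0∞ := ⨆ p : ℝ × ℝ, ‖u ![p.1, p.2, c]‖ₑ

theorem measurable_planeSup {u : (Fin 3 → ℝ) → ℝ} (hu : Continuous u) :
    Measurable (planeSup u) :=
  (lowerSemicontinuous_iSup fun _ => (by fun_prop : Continuous _).lowerSemicontinuous).measurable

theorem ae_planeSup_pow_four_le {f : (Fin 3 → ℝ) → ℝ} (hf : ContDiff ℝ 2 f)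
    (hfL2 : MemLp f 2 volume) (hf₂L2 : MemLp (pd 1 f) 2 volume) :
    ∀ᵐ c, planeSup f c ^ 4 ≤ 16 * (∫⁻ p : ℝ × ℝ, ‖f ![p.1, p.2, c]‖ₑ * ‖pd 0 f ![p.1, p.2, c]‖ₑ) *
      ∫⁻ p : ℝ × ℝ, ‖pd 1 f ![p.1, p.2, c]‖ₑ * ‖pd 0 (pd 1 f) ![p.1, p.2, c]‖ₑ := by
  have hf₂ : ContDiff ℝ 1 (pd 1 f) := contDiff_pd hf (by norm_num) 1
  have hfc := hf.continuous
  have hf₂c := hf₂.continuous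
  have hf₁c := continuous_pd hf two_ne_zero 0
  have hf₁₂c := continuous_pd hf₂ one_ne_zero 0
  have hfd := hf.differentiable two_ne_zero
  have hf₂d := hf₂.differentiable one_ne_zero
  filter_upwards [ae_lintegral_plane_ne_top (G := fun x => ‖f x‖ₑ ^ 2) (by fun_prop)
      hfL2.lintegral_enorm_sq_ne_top,
    ae_lintegral_plane_ne_top (G := fun x => ‖pd 1 f x‖ₑ ^ 2) (by fun_prop)
      hf₂L2.lintegral_enorm_sq_ne_top] with c hc hc₂
  exact iSup_enorm_pow_four_le (by fun_prop) (by fun_prop) (by fun_prop) (by fun_prop)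
    (fun a b => (hasDerivAt_vec₀ b c a).comp_pd hfd)
    (fun a b => (hasDerivAt_vec₁ a c b).comp_pd hfd)
    (fun a b => (hasDerivAt_vec₀ b c a).comp_pd hf₂d) hc hc₂

theorem sq_lintegral_planeSup_sq_le {f : (Fin 3 → ℝ) → ℝ} (hf : ContDiff ℝ 2 f)
    (hfL2 : MemLp f 2 volume) (hf₂L2 : MemLp (pd 1 f) 2 volume) :
    (∫⁻ c, planeSup f c ^ 2) ^ 2 ≤ (4 * ∫⁻ x, ‖f x‖ₑ * ‖pd 0 f x‖ₑ) *
      (4 * ∫⁻ x, ‖pd 1 f x‖ₑ * ‖pd 0 (pd 1 f) x‖ₑ) := by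
  have hf₂ : ContDiff ℝ 1 (pd 1 f) := contDiff_pd hf (by norm_num) 1
  have hfc := hf.continuous
  have hf₂c := hf₂.continuous
  have hf₁c := continuous_pd hf two_ne_zero 0
  have hf₁₂c := continuous_pd hf₂ one_ne_zero 0
  have hP₁ := measurable_lintegral_plane (G := fun x => ‖f x‖ₑ * ‖pd 0 f x‖ₑ) (by fun_prop)
  have hP₂ := measurable_lintegral_plane
    (G := fun x => ‖pd 1 f x‖ₑ * ‖pd 0 (pd 1 f) x‖ₑ) (by fun_prop)
  have := sq_lintegral_le_mul_of_sq_le (hP₁.const_mul 4).aemeasurable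
    (hP₂.const_mul 4).aemeasurable
    (by
      filter_upwards [ae_planeSup_pow_four_le hf hfL2 hf₂L2] with c hc
      calc (planeSup f c ^ 2) ^ 2 = planeSup f c ^ 4 := by ring
        _ ≤ _ := hc
        _ = _ := by ring)
  rwa [lintegral_const_mul _ hP₁, lintegral_const_mul _ hP₂,
    ← lintegral_eq_lintegral_vertical_lintegral_plane (G := fun x => ‖f x‖ₑ * ‖pd 0 f x‖ₑ)
      (by fun_prop),
    ← lintegral_eq_lintegral_vertical_lintegral_plane
      (G := fun x => ‖pd 1 f x‖ₑ * ‖pd 0 (pd 1 f) x‖ₑ) (by fun_prop)] at this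

theorem ae_enorm_sq_le_lintegral_vertical {u : (Fin 3 → ℝ) → ℝ} (hu : ContDiff ℝ 1 u)
    (huL2 : MemLp u 2 volume) :
    ∀ᵐ p : ℝ × ℝ, ∀ c, ‖u ![p.1, p.2, c]‖ₑ ^ 2 ≤
      2 * ∫⁻ t, ‖u ![p.1, p.2, t]‖ₑ * ‖pd 2 u ![p.1, p.2, t]‖ₑ := by
  have hu₃ := continuous_pd hu one_ne_zero 2
  filter_upwards [ae_lintegral_vertical_ne_top (G := fun x => ‖u x‖ₑ ^ 2)
    (hu.continuous.measurable.enorm.pow_const 2) huL2.lintegral_enorm_sq_ne_top] with p hp c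
  exact enorm_sq_le_two_mul_lintegral_enorm_mul_deriv_s2
    (fun t => (hasDerivAt_vec₂ p.1 p.2 t).comp_pd (hu.differentiable one_ne_zero))
    (by fun_prop) hp c

theorem sq_lintegral_plane_enorm_mul_le {h v : (Fin 3 → ℝ) → ℝ} (hh : ContDiff ℝ 1 h)
    (hv : ContDiff ℝ 1 v) (hhL2 : MemLp h 2 volume) (hvL2 : MemLp v 2 volume) (c : ℝ) :
    (∫⁻ p : ℝ × ℝ, ‖h ![p.1, p.2, c]‖ₑ * ‖v ![p.1, p.2, c]‖ₑ) ^ 2 ≤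
      (2 * ∫⁻ x, ‖h x‖ₑ * ‖pd 2 h x‖ₑ) * (2 * ∫⁻ x, ‖v x‖ₑ * ‖pd 2 v x‖ₑ) := by
  have hhc := hh.continuous
  have hvc := hv.continuous
  have hh₃ := continuous_pd hh one_ne_zero 2
  have hv₃ := continuous_pd hv one_ne_zero 2
  have hTh := measurable_lintegral_vertical (G := fun x => ‖h x‖ₑ * ‖pd 2 h x‖ₑ) (by fun_prop)
  have hTv := measurable_lintegral_vertical (G := fun x => ‖v x‖ₑ * ‖pd 2 v x‖ₑ) (by fun_prop)
  have := sq_lintegral_le_mul_of_sq_le (hTh.const_mul 2).aemeasurable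
    (hTv.const_mul 2).aemeasurable
    (by
      filter_upwards [ae_enorm_sq_le_lintegral_vertical hh hhL2,
        ae_enorm_sq_le_lintegral_vertical hv hvL2] with p hph hpv
      rw [mul_pow]
      exact mul_le_mul' (hph c) (hpv c))
  rwa [lintegral_const_mul _ hTh, lintegral_const_mul _ hTv,
    ← lintegral_eq_lintegral_plane_lintegral_vertical (G := fun x => ‖h x‖ₑ * ‖pd 2 h x‖ₑ)
      (by fun_prop),
    ← lintegral_eq_lintegral_plane_lintegral_vertical (G := fun x => ‖v x‖ₑ * ‖pd 2 v x‖ₑ)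
      (by fun_prop)] at this

theorem lintegral_le_iSup_mul_lintegral_planeSup_mul {f g h v : (Fin 3 → ℝ) → ℝ}
    (hf : Continuous f) (hg : Continuous g) (hh : Continuous h) (hv : Continuous v) :
    ∫⁻ x, ‖f x‖ₑ * ‖g x‖ₑ * ‖h x‖ₑ * ‖v x‖ₑ ≤
      (⨆ c, ∫⁻ p : ℝ × ℝ, ‖h ![p.1, p.2, c]‖ₑ * ‖v ![p.1, p.2, c]‖ₑ) *
        ∫⁻ c, planeSup f c * planeSup g c := by
  set W := ⨆ c, ∫⁻ p : ℝ × ℝ, ‖h ![p.1, p.2, c]‖ₑ * ‖v ![p.1, p.2, c]‖ₑ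
  have hslice : ∀ c, ∫⁻ p : ℝ × ℝ, ‖f ![p.1, p.2, c]‖ₑ * ‖g ![p.1, p.2, c]‖ₑ *
      ‖h ![p.1, p.2, c]‖ₑ * ‖v ![p.1, p.2, c]‖ₑ ≤ planeSup f c * planeSup g c * W := by
    intro c
    calc _ ≤ ∫⁻ p : ℝ × ℝ, planeSup f c * planeSup g c *
          (‖h ![p.1, p.2, c]‖ₑ * ‖v ![p.1, p.2, c]‖ₑ) := by
          refine lintegral_mono fun p => ?_
          rw [mul_assoc _ ‖h _‖ₑ]
          gcongr
          · exact le_iSup (fun p : ℝ × ℝ => ‖f ![p.1, p.2, c]‖ₑ) p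
          · exact le_iSup (fun p : ℝ × ℝ => ‖g ![p.1, p.2, c]‖ₑ) p
      _ = planeSup f c * planeSup g c *
          ∫⁻ p : ℝ × ℝ, ‖h ![p.1, p.2, c]‖ₑ * ‖v ![p.1, p.2, c]‖ₑ :=
          lintegral_const_mul _ (by fun_prop)
      _ ≤ planeSup f c * planeSup g c * W := by
          gcongr
          exact le_iSup (fun c => ∫⁻ p : ℝ × ℝ, ‖h ![p.1, p.2, c]‖ₑ * ‖v ![p.1, p.2, c]‖ₑ) c
  calc _ = ∫⁻ c, ∫⁻ p : ℝ × ℝ, ‖f ![p.1, p.2, c]‖ₑ * ‖g ![p.1, p.2, c]‖ₑ *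
        ‖h ![p.1, p.2, c]‖ₑ * ‖v ![p.1, p.2, c]‖ₑ :=
        lintegral_eq_lintegral_vertical_lintegral_plane (by fun_prop)
    _ ≤ ∫⁻ c, planeSup f c * planeSup g c * W := lintegral_mono hslice
    _ = W * ∫⁻ c, planeSup f c * planeSup g c := by
        have hm : Measurable fun c => planeSup f c * planeSup g c :=
          (measurable_planeSup hf).mul (measurable_planeSup hg)
        rw [lintegral_mul_const _ hm, mul_comm]

theorem lintegral_enorm_mul_pow_four_le {f g h v : (Fin 3 → ℝ) → ℝ}
    (hf : ContDiff ℝ 2 f) (hg : ContDiff ℝ 2 g) (hh : ContDiff ℝ 1 h) (hv : ContDiff ℝ 1 v)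
    (hfL2 : MemLp f 2 volume) (hf₂L2 : MemLp (pd 1 f) 2 volume)
    (hgL2 : MemLp g 2 volume) (hg₂L2 : MemLp (pd 1 g) 2 volume)
    (hhL2 : MemLp h 2 volume) (hvL2 : MemLp v 2 volume) :
    (∫⁻ x, ‖f x‖ₑ * ‖g x‖ₑ * ‖h x‖ₑ * ‖v x‖ₑ) ^ 4 ≤
      ((2 * ∫⁻ x, ‖h x‖ₑ * ‖pd 2 h x‖ₑ) * (2 * ∫⁻ x, ‖v x‖ₑ * ‖pd 2 v x‖ₑ)) ^ 2 *
        ((4 * ∫⁻ x, ‖f x‖ₑ * ‖pd 0 f x‖ₑ) * (4 * ∫⁻ x, ‖pd 1 f x‖ₑ * ‖pd 0 (pd 1 f) x‖ₑ)) *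
        ((4 * ∫⁻ x, ‖g x‖ₑ * ‖pd 0 g x‖ₑ) * (4 * ∫⁻ x, ‖pd 1 g x‖ₑ * ‖pd 0 (pd 1 g) x‖ₑ)) := by
  set W := ⨆ c, ∫⁻ p : ℝ × ℝ, ‖h ![p.1, p.2, c]‖ₑ * ‖v ![p.1, p.2, c]‖ₑ
  have hW : W ^ 2 ≤ (2 * ∫⁻ x, ‖h x‖ₑ * ‖pd 2 h x‖ₑ) * (2 * ∫⁻ x, ‖v x‖ₑ * ‖pd 2 v x‖ₑ) := by
    rw [ENNReal.iSup_pow]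
    exact iSup_le (sq_lintegral_plane_enorm_mul_le hh hv hhL2 hvL2)
  have hfg := sq_lintegral_le_mul_of_sq_le (μ := volume)
    ((measurable_planeSup hf.continuous).pow_const 2).aemeasurable
    ((measurable_planeSup hg.continuous).pow_const 2).aemeasurable
    (ae_of_all _ fun c => (mul_pow (planeSup f c) (planeSup g c) 2).le)
  calc _ ≤ (W * ∫⁻ c, planeSup f c * planeSup g c) ^ 4 := by
        gcongr
        exact lintegral_le_iSup_mul_lintegral_planeSup_mul hf.continuous hg.continuous
          hh.continuous hv.continuous
    _ = (W ^ 2) ^ 2 * ((∫⁻ c, planeSup f c * planeSup g c) ^ 2) ^ 2 := by ring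
    _ ≤ (W ^ 2) ^ 2 * ((∫⁻ c, planeSup f c ^ 2) ^ 2 * (∫⁻ c, planeSup g c ^ 2) ^ 2) := by
        rw [← mul_pow (∫⁻ c, planeSup f c ^ 2)]
        gcongr
    _ ≤ _ := by
        rw [← mul_assoc]
        gcongr
        · exact sq_lintegral_planeSup_sq_le hf hfL2 hf₂L2
        · exact sq_lintegral_planeSup_sq_le hg hgL2 hg₂L2

theorem lintegral_enorm_mul_pd_le {u : (Fin 3 → ℝ) → ℝ} (hu : ContDiff ℝ 1 u) (i : Fin 3) :
    ∫⁻ x, ‖u x‖ₑ * ‖pd i u x‖ₑ ≤ eLpNorm u 2 volume * eLpNorm (pd i u) 2 volume :=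
  lintegral_enorm_mul_le_eLpNorm_mul_eLpNorm hu.continuous.aestronglyMeasurable
    (continuous_pd hu one_ne_zero i).aestronglyMeasurable

theorem lintegral_enorm_mul_le {f g h v : (Fin 3 → ℝ) → ℝ}
    (hf : ContDiff ℝ 2 f) (hg : ContDiff ℝ 2 g) (hh : ContDiff ℝ 1 h) (hv : ContDiff ℝ 1 v)
    (hfL2 : MemLp f 2 volume) (hf₂L2 : MemLp (pd 1 f) 2 volume)
    (hgL2 : MemLp g 2 volume) (hg₂L2 : MemLp (pd 1 g) 2 volume)
    (hhL2 : MemLp h 2 volume) (hvL2 : MemLp v 2 volume) :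
    ∫⁻ x, ‖f x‖ₑ * ‖g x‖ₑ * ‖h x‖ₑ * ‖v x‖ₑ ≤
      8 * eLpNorm f 2 volume ^ (1 / 4 : ℝ) * eLpNorm (pd 0 f) 2 volume ^ (1 / 4 : ℝ) *
        eLpNorm (pd 1 f) 2 volume ^ (1 / 4 : ℝ) *
        eLpNorm (pd 0 (pd 1 f)) 2 volume ^ (1 / 4 : ℝ) *
        eLpNorm g 2 volume ^ (1 / 4 : ℝ) * eLpNorm (pd 0 g) 2 volume ^ (1 / 4 : ℝ) *
        eLpNorm (pd 1 g) 2 volume ^ (1 / 4 : ℝ) *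
        eLpNorm (pd 0 (pd 1 g)) 2 volume ^ (1 / 4 : ℝ) *
        eLpNorm h 2 volume ^ (1 / 2 : ℝ) * eLpNorm (pd 2 h) 2 volume ^ (1 / 2 : ℝ) *
        eLpNorm v 2 volume ^ (1 / 2 : ℝ) * eLpNorm (pd 2 v) 2 volume ^ (1 / 2 : ℝ) := by
  rw [← ENNReal.rpow_le_rpow_iff (z := 4) (by norm_num)]
  simp only [ENNReal.mul_rpow_of_nonneg _ _ (by norm_num : (0 : ℝ) ≤ 4), ← ENNReal.rpow_mul]
  norm_num
  refine (lintegral_enorm_mul_pow_four_le hf hg hh hv hfL2 hf₂L2 hgL2 hg₂L2 hhL2 hvL2).trans ?_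
  have hf₂ : ContDiff ℝ 1 (pd 1 f) := contDiff_pd hf (by norm_num) 1
  have hg₂ : ContDiff ℝ 1 (pd 1 g) := contDiff_pd hg (by norm_num) 1
  grw [lintegral_enorm_mul_pd_le hh 2, lintegral_enorm_mul_pd_le hv 2,
    lintegral_enorm_mul_pd_le (hf.of_le one_le_two) 0, lintegral_enorm_mul_pd_le hf₂ 0,
    lintegral_enorm_mul_pd_le (hg.of_le one_le_two) 0, lintegral_enorm_mul_pd_le hg₂ 0]
  exact le_of_eq (by ring)

/-- Anisotropic quadrilinear estimate. -/
theorem anisotropic_quadrilinear :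
    ∃ C > 0, ∀ f g h v : (Fin 3 → ℝ) → ℝ,
      ContDiff ℝ 2 f → ContDiff ℝ 2 g → ContDiff ℝ 1 h → ContDiff ℝ 1 v →
      MemLp f 2 volume → MemLp (pd 0 f) 2 volume → MemLp (pd 1 f) 2 volume →
      MemLp (pd 0 (pd 1 f)) 2 volume →
      MemLp g 2 volume → MemLp (pd 0 g) 2 volume → MemLp (pd 1 g) 2 volume →
      MemLp (pd 0 (pd 1 g)) 2 volume →
      MemLp h 2 volume → MemLp (pd 2 h) 2 volume →
      MemLp v 2 volume → MemLp (pd 2 v) 2 volume →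
      ∫ x, |f x * g x * h x * v x| ≤
        C * L2 f ^ ((1:ℝ)/4) * L2 (pd 0 f) ^ ((1:ℝ)/4) * L2 (pd 1 f) ^ ((1:ℝ)/4) *
          L2 (pd 0 (pd 1 f)) ^ ((1:ℝ)/4) *
          L2 g ^ ((1:ℝ)/4) * L2 (pd 0 g) ^ ((1:ℝ)/4) * L2 (pd 1 g) ^ ((1:ℝ)/4) *
          L2 (pd 0 (pd 1 g)) ^ ((1:ℝ)/4) *
          L2 h ^ ((1:ℝ)/2) * L2 (pd 2 h) ^ ((1:ℝ)/2) *
          L2 v ^ ((1:ℝ)/2) * L2 (pd 2 v) ^ ((1:ℝ)/2) := by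
  refine ⟨8, by norm_num, fun f g h v hf hg hh hv hfL2 hf₀L2 hf₁L2 hf₀₁L2 hgL2 hg₀L2 hg₁L2
    hg₀₁L2 hhL2 hh₂L2 hvL2 hv₂L2 => ?_⟩
  have hfghv : Continuous fun x => f x * g x * h x * v x :=
    ((hf.continuous.mul hg.continuous).mul hh.continuous).mul hv.continuous
  calc ∫ x, |f x * g x * h x * v x|
      = (∫⁻ x, ‖f x‖ₑ * ‖g x‖ₑ * ‖h x‖ₑ * ‖v x‖ₑ).toReal := by
        simpa [enorm_mul] using integral_norm_eq_lintegral_enorm hfghv.aestronglyMeasurable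
    _ ≤ _ := by
        refine ENNReal.toReal_mono ?_
          (lintegral_enorm_mul_le hf hg hh hv hfL2 hf₁L2 hgL2 hg₁L2 hhL2 hvL2)
        repeat' apply ENNReal.mul_ne_top
        all_goals first
          | exact ENNReal.ofNat_ne_top
          | exact ENNReal.rpow_ne_top_of_nonneg (by norm_num) (MemLp.eLpNorm_ne_top ‹_›)
    _ = _ := by simp [L2, ENNReal.toReal_mul, ENNReal.toReal_rpow]
end

section
/- For a function f on ℝ³ with f and ∂₁f in L², the mixed norm ‖f‖_{L²_{x₃}L²_{x₂}L^∞_{x₁}} (L^∞ in x₁ first, then L² in x₂ and x₃) is bounded by √2 ‖f‖_{L²}^{1/2} ‖∂₁f‖_{L²}^{1/2}. -/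
/-!
If `g : ℝ → ℝ` is differentiable with `g, g' ∈ L²`, then `g²` and its derivative `2 g g'` are
integrable, so `g²` vanishes at `-∞` and `g(x)² = ∫_{-∞}^x 2 g g' ≤ 2 ‖g g'‖₁`. Applying this on
almost every line parallel to the `x₁`-axis, integrating over `(x₂, x₃)` by Tonelli and closing
with Cauchy–Schwarz gives `‖f‖²_{L²L^∞} ≤ 2 ‖f‖₂ ‖∂₁f‖₂`.
-/

open MeasureTheory

/-- Partial derivative in the first coordinate on `ℝ³ = ℝ × ℝ × ℝ`. -/
noncomputable def d1 (f : ℝ × ℝ × ℝ → ℝ) : ℝ × ℝ × ℝ → ℝ :=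
  fun x => fderiv ℝ f x (1, 0, 0)

open Filter Topology Set
open scoped ENNReal

theorem sq_le_two_mul_integral_abs_mul_deriv {g : ℝ → ℝ} (hg : Differentiable ℝ g)
    (hg2 : MemLp g 2 volume) (hg'2 : MemLp (deriv g) 2 volume) (x : ℝ) :
    g x ^ 2 ≤ 2 * ∫ t, |g t * deriv g t| := by
  have hint : Integrable (fun t => 2 * (g t * deriv g t)) :=
    (hg2.integrable_mul hg'2).const_mul 2
  have hderiv : ∀ t, HasDerivAt (fun t => g t ^ 2) (2 * (g t * deriv g t)) t := fun t =>
    ((hg t).hasDerivAt.fun_pow 2).congr_deriv (by ring)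
  have hlim : Tendsto (fun t => g t ^ 2) atBot (𝓝 0) :=
    tendsto_zero_of_hasDerivAt_of_integrableOn_Iic (a := x) (fun t _ => hderiv t)
      hint.integrableOn hg2.integrable_sq.integrableOn
  have hint_abs : Integrable (fun t => 2 * |g t * deriv g t|) :=
    hint.abs.congr (ae_of_all _ fun t => by simp [abs_mul])
  calc g x ^ 2 = ∫ t in Iic x, 2 * (g t * deriv g t) := by
        rw [integral_Iic_of_hasDerivAt_of_tendsto' (fun t _ => hderiv t) hint.integrableOn hlim,
          sub_zero]
    _ ≤ ∫ t in Iic x, 2 * |g t * deriv g t| :=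
        setIntegral_mono hint.integrableOn hint_abs.integrableOn fun t => by
          gcongr
          exact le_abs_self _
    _ ≤ ∫ t, 2 * |g t * deriv g t| :=
        setIntegral_le_integral hint_abs (ae_of_all _ fun t => by positivity)
    _ = 2 * ∫ t, |g t * deriv g t| := integral_const_mul _ _

theorem eLpNorm_top_sq_le_two_mul_lintegral_enorm_mul_deriv {g : ℝ → ℝ}
    (hg : Differentiable ℝ g) (hg2 : MemLp g 2 volume) (hg'2 : MemLp (deriv g) 2 volume) :
    eLpNorm g ∞ volume ^ 2 ≤ 2 * ∫⁻ t, ‖g t‖ₑ * ‖deriv g t‖ₑ := by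
  set C := 2 * ∫ t, |g t * deriv g t|
  calc eLpNorm g ∞ volume ^ 2 ≤ ENNReal.ofReal √C ^ 2 := by
        gcongr
        rw [eLpNorm_exponent_top]
        exact eLpNormEssSup_le_of_ae_bound <| ae_of_all _ fun x =>
          Real.abs_le_sqrt (sq_le_two_mul_integral_abs_mul_deriv hg hg2 hg'2 x)
    _ = ENNReal.ofReal C := by
        rw [← ENNReal.ofReal_pow (Real.sqrt_nonneg _), Real.sq_sqrt (by positivity)]
    _ = 2 * ∫⁻ t, ‖g t‖ₑ * ‖deriv g t‖ₑ := by
        rw [ENNReal.ofReal_mul zero_le_two, ofReal_integral_eq_lintegral_ofReal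
          (f := fun t => |g t * deriv g t|) (hg2.integrable_mul hg'2).abs
          (ae_of_all _ fun t => abs_nonneg _)]
        simp [Real.enorm_eq_ofReal_abs]

theorem eLpNorm_toReal_sq_le_lintegral_sq {β : Type*} [MeasurableSpace β] {ν : Measure β}
    (F : β → ℝ≥0∞) :
    eLpNorm (fun y => (F y).toReal) 2 ν ^ 2 ≤ ∫⁻ y, F y ^ 2 ∂ν := by
  have h := eLpNorm_nnreal_pow_eq_lintegral (f := fun y => (F y).toReal) (μ := ν) (p := 2)
    two_ne_zero
  simp only [NNReal.coe_ofNat, ENNReal.rpow_ofNat, ENNReal.coe_ofNat] at h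
  rw [h]
  gcongr with y
  rw [Real.enorm_eq_ofReal ENNReal.toReal_nonneg]
  exact ENNReal.ofReal_toReal_le

section Slices

variable {α β : Type*} [MeasurableSpace α] [MeasurableSpace β] {μ : Measure α} {ν : Measure β}
  [SFinite ν]

theorem MeasureTheory.MemLp.ae_memLp_prodMk_right [SFinite μ] {E : Type*} [NormedAddCommGroup E]
    {p : ℝ≥0∞} (hp0 : p ≠ 0) (hp : p ≠ ∞) {f : α × β → E} (hf : MemLp f p (μ.prod ν)) :
    ∀ᵐ y ∂ν, MemLp (fun x => f (x, y)) p μ := by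
  filter_upwards [hf.1.prodMk_right, (hf.integrable_norm_rpow hp0 hp).prod_left_ae]
    with y hmeas hint
  exact (integrable_norm_rpow_iff hmeas hp0 hp).1 hint

noncomputable def derivFst (f : ℝ × β → ℝ) : ℝ × β → ℝ :=
  fun p => deriv (fun x => f (x, p.2)) p.1

theorem lintegral_eLpNorm_top_sq_le {f : ℝ × β → ℝ} (hf : ∀ y, Differentiable ℝ fun x => f (x, y))
    (hf2 : MemLp f 2 (volume.prod ν)) (hf'2 : MemLp (derivFst f) 2 (volume.prod ν)) :
    ∫⁻ y, eLpNorm (fun x => f (x, y)) ∞ volume ^ 2 ∂ν ≤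
      2 * (eLpNorm f 2 (volume.prod ν) * eLpNorm (derivFst f) 2 (volume.prod ν)) := by
  have hHolder := eLpNorm_smul_le_mul_eLpNorm (p := 2) (q := 2) (r := 1) hf'2.1 hf2.1
  calc ∫⁻ y, eLpNorm (fun x => f (x, y)) ∞ volume ^ 2 ∂ν
      ≤ ∫⁻ y, (2 * ∫⁻ x, ‖f (x, y)‖ₑ * ‖derivFst f (x, y)‖ₑ) ∂ν := by
        refine lintegral_mono_ae ?_
        filter_upwards [hf2.ae_memLp_prodMk_right two_ne_zero ENNReal.ofNat_ne_top,
          hf'2.ae_memLp_prodMk_right two_ne_zero ENNReal.ofNat_ne_top] with y hy hy'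
        exact eLpNorm_top_sq_le_two_mul_lintegral_enorm_mul_deriv (hf y) hy hy'
    _ = 2 * ∫⁻ p, ‖f p‖ₑ * ‖derivFst f p‖ₑ ∂(volume.prod ν) := by
        rw [lintegral_const_mul' _ _ ENNReal.ofNat_ne_top, lintegral_prod_symm
          (fun p => ‖f p‖ₑ * ‖derivFst f p‖ₑ) (hf2.1.enorm.mul hf'2.1.enorm)]
    _ = 2 * eLpNorm (f * derivFst f) 1 (volume.prod ν) := by
        simp only [eLpNorm_one_eq_lintegral_enorm, Pi.mul_apply, enorm_mul]
    _ ≤ 2 * (eLpNorm f 2 (volume.prod ν) * eLpNorm (derivFst f) 2 (volume.prod ν)) := by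
        gcongr
        exact hHolder

end Slices

theorem ENNReal.toReal_le_sqrt_two_mul_rpow_half_mul_rpow_half {a b c : ℝ≥0∞}
    (h : a ^ 2 ≤ 2 * (b * c)) (hb : b ≠ ∞) (hc : c ≠ ∞) :
    a.toReal ≤ √2 * b.toReal ^ (1 / 2 : ℝ) * c.toReal ^ (1 / 2 : ℝ) := by
  have h' : a.toReal ^ 2 ≤ 2 * (b.toReal * c.toReal) := by
    simpa [ENNReal.toReal_pow, ENNReal.toReal_mul] using ENNReal.toReal_mono (by finiteness) h
  rw [← Real.sqrt_eq_rpow, ← Real.sqrt_eq_rpow, mul_assoc, ← Real.sqrt_mul ENNReal.toReal_nonneg,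
    ← Real.sqrt_mul zero_le_two]
  exact Real.le_sqrt_of_sq_le h'

theorem d1_eq_derivFst {f : ℝ × ℝ × ℝ → ℝ} (hf : Differentiable ℝ f) : d1 f = derivFst f := by
  funext p
  have hline : HasDerivAt (fun x : ℝ => (x, p.2)) (1, 0, 0) p.1 :=
    (hasDerivAt_id p.1).prodMk (hasDerivAt_const p.1 p.2)
  exact ((hf p).hasFDerivAt.comp_hasDerivAt p.1 hline).deriv.symm

/-- Mixed norm bound: `‖f‖_{L²_{x₃}L²_{x₂}L^∞_{x₁}} ≤ √2 ‖f‖_{L²}^{1/2} ‖∂₁f‖_{L²}^{1/2}`. -/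
theorem mixed_norm_Linfty_x1 (f : ℝ × ℝ × ℝ → ℝ) (hf : ContDiff ℝ 1 f)
    (h2 : MemLp f 2 volume) (h2' : MemLp (d1 f) 2 volume) :
    (eLpNorm (fun yz : ℝ × ℝ =>
        (eLpNorm (fun x1 : ℝ => f (x1, yz.1, yz.2)) ⊤ volume).toReal) 2 volume).toReal ≤
      Real.sqrt 2 * (eLpNorm f 2 volume).toReal ^ ((1:ℝ)/2) *
        (eLpNorm (d1 f) 2 volume).toReal ^ ((1:ℝ)/2) := by
  have hdiff : Differentiable ℝ f := hf.differentiable one_ne_zero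
  have hvol : (volume : Measure (ℝ × ℝ × ℝ)) = volume.prod volume := Measure.volume_eq_prod _ _
  have hslice (yz : ℝ × ℝ) : Differentiable ℝ fun x => f (x, yz) :=
    hdiff.comp (differentiable_id.prodMk (differentiable_const yz))
  rw [d1_eq_derivFst hdiff] at h2' ⊢
  rw [hvol] at h2 h2' ⊢
  exact ENNReal.toReal_le_sqrt_two_mul_rpow_half_mul_rpow_half
    ((eLpNorm_toReal_sq_le_lintegral_sq _).trans (lintegral_eLpNorm_top_sq_le hslice h2 h2'))
    h2.2.ne h2'.2.ne
end

section
/- Let f : ℝ³ → ℝ be smooth with compact support (or sufficient decay), and let u₃ : ℝ³ → ℝ be smooth. Then |∫_{ℝ³} ∂₃u₃ · f² dx| ≤ C ‖u₃‖_{L²}^{1/4} ‖∂₁u₃‖_{L²}^{1/4} ‖∂₂u₃‖_{L²}^{1/4} ‖∂₁∂₂u₃‖_{L²}^{1/4} ‖f‖_{L²}^{1/2} ‖∂₃f‖_{L²}^{3/2}, obtained by first integrating by parts in x₃ and then applying the anisotropic quadrilinear estimate. -/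
open MeasureTheory

/-- Componentwise partial derivative of a vector field on `ℝ³`. -/
noncomputable def pdv (j : Fin 3) (v : (Fin 3 → ℝ) → Fin 3 → ℝ) :
    (Fin 3 → ℝ) → Fin 3 → ℝ :=
  fun x i => pd j (fun y => v y i) x

/-- The `H^k(ℝ³)` Sobolev norm of a vector field (sum over components of the
`L²` norms of iterated derivatives up to order `k`). -/
noncomputable def HV (k : ℕ) (v : (Fin 3 → ℝ) → Fin 3 → ℝ) : ℝ :=
  ∑ i : Fin 3, ∑ m ∈ Finset.range (k + 1),
    (eLpNorm (fun x => ‖iteratedFDeriv ℝ m (fun y => v y i) x‖) 2 volume).toReal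

open ENNReal

namespace VVW


/-- build a point of `ℝ³` from coordinates -/
def mk3 (a b c : ℝ) : Fin 3 → ℝ := ![a, b, c]

lemma continuous_mk3 : Continuous (fun p : ℝ × ℝ × ℝ => mk3 p.1 p.2.1 p.2.2) := by
  apply continuous_pi
  intro j
  fin_cases j
  · exact continuous_fst
  · exact continuous_snd.fst
  · exact continuous_snd.snd

/-- for each i, the measure preserving equiv splitting off coordinate i -/
noncomputable def eqv (i : Fin 3) : (Fin 3 → ℝ) ≃ᵐ ℝ × (ℝ × ℝ) :=
  (MeasurableEquiv.piFinSuccAbove (fun _ => ℝ) i).trans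
    ((MeasurableEquiv.refl ℝ).prodCongr MeasurableEquiv.finTwoArrow)

lemma eqv_mp (i : Fin 3) : MeasurePreserving (eqv i) volume volume := by
  have h1 := measurePreserving_piFinSuccAbove (fun _ : Fin 3 => (volume : Measure ℝ)) i
  have h2 : MeasurePreserving (Prod.map (id : ℝ → ℝ) (MeasurableEquiv.finTwoArrow : (Fin 2 → ℝ) ≃ᵐ ℝ × ℝ))
      ((volume : Measure ℝ).prod (Measure.pi fun _ => (volume : Measure ℝ)))
      ((volume : Measure ℝ).prod ((volume : Measure ℝ).prod (volume : Measure ℝ))) :=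
    (MeasurePreserving.id _).prod (measurePreserving_finTwoArrow (volume : Measure ℝ))
  have : MeasurePreserving (eqv i) (Measure.pi fun _ => (volume : Measure ℝ))
      ((volume : Measure ℝ).prod ((volume : Measure ℝ).prod (volume : Measure ℝ))) := by
    have := h2.comp h1
    exact this
  simpa [volume_pi, ← Measure.volume_eq_prod] using this

lemma eqv0_symm (t : ℝ) (z : ℝ × ℝ) : (eqv 0).symm (t, z) = mk3 t z.1 z.2 := by
  have h : eqv 0 (mk3 t z.1 z.2) = (t, z) := rfl
  rw [← h, MeasurableEquiv.symm_apply_apply]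

lemma eqv1_symm (t : ℝ) (z : ℝ × ℝ) : (eqv 1).symm (t, z) = mk3 z.1 t z.2 := by
  have h : eqv 1 (mk3 z.1 t z.2) = (t, z) := rfl
  rw [← h, MeasurableEquiv.symm_apply_apply]

lemma eqv2_symm (t : ℝ) (z : ℝ × ℝ) : (eqv 2).symm (t, z) = mk3 z.1 z.2 t := by
  have h : eqv 2 (mk3 z.1 z.2 t) = (t, z) := rfl
  rw [← h, MeasurableEquiv.symm_apply_apply]

/-- generic slice: coordinate i innermost -/
lemma lint_slice (i : Fin 3) (F : (Fin 3 → ℝ) → ℝ≥0∞) (hF : Measurable F) :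
    ∫⁻ x, F x = ∫⁻ z : ℝ × ℝ, ∫⁻ t : ℝ, F ((eqv i).symm (t, z)) := by
  rw [← ((eqv_mp i).symm (eqv i)).lintegral_comp hF, Measure.volume_eq_prod]
  exact lintegral_prod_symm _ ((hF.comp (eqv i).symm.measurable).aemeasurable)

lemma lint_slice1 (F : (Fin 3 → ℝ) → ℝ≥0∞) (hF : Measurable F) :
    ∫⁻ x, F x = ∫⁻ z : ℝ × ℝ, ∫⁻ t : ℝ, F (mk3 z.1 t z.2) := by
  simpa only [eqv1_symm] using lint_slice 1 F hF

lemma lint_slice2 (F : (Fin 3 → ℝ) → ℝ≥0∞) (hF : Measurable F) :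
    ∫⁻ x, F x = ∫⁻ z : ℝ × ℝ, ∫⁻ t : ℝ, F (mk3 z.1 z.2 t) := by
  simpa only [eqv2_symm] using lint_slice 2 F hF

/-- Bochner version for coordinate 2 -/
lemma int_slice2 (F : (Fin 3 → ℝ) → ℝ) (hF : Integrable F volume) :
    ∫ x, F x = ∫ z : ℝ × ℝ, ∫ t : ℝ, F (mk3 z.1 z.2 t) := by
  have h := ((eqv_mp 2).symm (eqv 2)).integral_comp (eqv 2).symm.measurableEmbedding F
  rw [← h]
  have hI : Integrable (fun p : ℝ × (ℝ × ℝ) => F ((eqv 2).symm p)) (volume : Measure (ℝ × (ℝ × ℝ))) := by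
    rw [Measure.volume_eq_prod]
    have := ((eqv_mp 2).symm (eqv 2)).integrable_comp_emb (eqv 2).symm.measurableEmbedding (g := F)
    rw [← Measure.volume_eq_prod]
    exact this.mpr hF
  rw [Measure.volume_eq_prod] at hI ⊢
  rw [integral_prod_symm _ hI]
  simp only [eqv2_symm]



/-- 1D Agmon-type bound: if `g²` and `g·g'` are integrable on ℝ and `g` is `C¹`,
then `g a ² ≤ 2∫|g g'|` for all `a`. -/
lemma oneD_sq_le {g : ℝ → ℝ} (hg : ContDiff ℝ 1 g)
    (h2 : Integrable (fun t => g t ^ 2) volume)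
    (h12 : Integrable (fun t => g t * deriv g t) volume) (a : ℝ) :
    g a ^ 2 ≤ 2 * ∫ t, |g t * deriv g t| := by
  have hgc : Continuous g := hg.continuous
  have hd : ∀ t, HasDerivAt g (deriv g t) t :=
    fun t => (hg.differentiable one_ne_zero t).hasDerivAt
  have hdc : Continuous (deriv g) := hg.continuous_deriv le_rfl
  have hsq : ∀ t : ℝ, HasDerivAt (fun s => g s ^ 2) (2 * (g t * deriv g t)) t := by
    intro t
    have := (hd t).fun_pow 2
    simpa [mul_assoc] using this
  have habs : Integrable (fun t => |g t * deriv g t|) volume := h12.abs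
  -- key : difference of squares bounded by the total integral
  have key : ∀ t : ℝ, g a ^ 2 ≤ g t ^ 2 + 2 * ∫ s, |g s * deriv g s| := by
    intro t
    have hii : IntervalIntegrable (fun s => 2 * (g s * deriv g s)) volume t a :=
      ((continuous_const.mul (hgc.mul hdc)).intervalIntegrable t a)
    have hftc := intervalIntegral.integral_eq_sub_of_hasDerivAt (fun s _ => hsq s) hii
    have hb : |∫ s in t..a, 2 * (g s * deriv g s)| ≤ 2 * ∫ s, |g s * deriv g s| := by
      rcases le_total t a with h | h
      · calc |∫ s in t..a, 2 * (g s * deriv g s)|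
            ≤ ∫ s in t..a, |2 * (g s * deriv g s)| :=
              intervalIntegral.abs_integral_le_integral_abs h
          _ = ∫ s in Set.Ioc t a, |2 * (g s * deriv g s)| := by
              rw [intervalIntegral.integral_of_le h]
          _ ≤ ∫ s, |2 * (g s * deriv g s)| := by
              apply setIntegral_le_integral ((h12.const_mul 2).abs)
              filter_upwards with s using abs_nonneg _
          _ = 2 * ∫ s, |g s * deriv g s| := by
              simp_rw [abs_mul]
              rw [integral_const_mul]
              norm_num
      · calc |∫ s in t..a, 2 * (g s * deriv g s)|
            = |∫ s in a..t, 2 * (g s * deriv g s)| := by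
              rw [intervalIntegral.integral_symm]; rw [abs_neg]
          _ ≤ ∫ s in a..t, |2 * (g s * deriv g s)| :=
              intervalIntegral.abs_integral_le_integral_abs h
          _ = ∫ s in Set.Ioc a t, |2 * (g s * deriv g s)| := by
              rw [intervalIntegral.integral_of_le h]
          _ ≤ ∫ s, |2 * (g s * deriv g s)| := by
              apply setIntegral_le_integral ((h12.const_mul 2).abs)
              filter_upwards with s using abs_nonneg _
          _ = 2 * ∫ s, |g s * deriv g s| := by
              simp_rw [abs_mul]
              rw [integral_const_mul]
              norm_num
    nlinarith [abs_nonneg (∫ s in t..a, 2 * (g s * deriv g s)),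
      le_abs_self (∫ s in t..a, 2 * (g s * deriv g s)), hftc]
  -- find points where g² is small
  refine le_of_forall_pos_le_add ?_
  intro ε hε
  by_cases hsmall : ∃ t, g t ^ 2 < ε
  · obtain ⟨t, ht⟩ := hsmall
    have := key t
    linarith
  · exfalso
    push_neg at hsmall
    set I := ∫ s, g s ^ 2 with hI
    have hInn : 0 ≤ I := integral_nonneg (fun s => sq_nonneg _)
    set R : ℝ := I / ε + 1 with hR
    have hRpos : 0 < R := by
      have h' := div_nonneg hInn hε.le
      rw [hR]; linarith
    have h1 : ε * R ≤ ∫ s in Set.Icc 0 R, g s ^ 2 := by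
      have hconst : ∫ s in Set.Icc (0:ℝ) R, ε = ε * R := by
        simp [Real.volume_Icc, hRpos.le, ENNReal.toReal_ofReal, mul_comm]
      rw [← hconst]
      apply setIntegral_mono_on
      · exact integrableOn_const (by rw [Real.volume_Icc]; exact ofReal_ne_top)
      · exact h2.integrableOn
      · exact measurableSet_Icc
      · intro s _; exact hsmall s
    have h2' : ∫ s in Set.Icc 0 R, g s ^ 2 ≤ I := by
      apply setIntegral_le_integral h2
      filter_upwards with s using sq_nonneg _
    have : ε * R ≤ I := le_trans h1 h2'
    rw [hR] at this
    have : ε * (I / ε) + ε ≤ I := by linarith [this]; 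
    rw [mul_div_cancel₀] at this
    · linarith
    · exact ne_of_gt hε
  
/-- 1D integration by parts on ℝ when one factor has compact support. -/
lemma oneD_ibp {g h : ℝ → ℝ} (hg : ContDiff ℝ 1 g) (hh : ContDiff ℝ 1 h)
    (hsupp : HasCompactSupport h) :
    ∫ t, deriv g t * h t = - ∫ t, g t * deriv h t := by
  have hgc : Continuous g := hg.continuous
  have hhc : Continuous h := hh.continuous
  have hgd : ∀ t, HasDerivAt g (deriv g t) t := fun t => (hg.differentiable one_ne_zero t).hasDerivAt
  have hhd : ∀ t, HasDerivAt h (deriv h t) t := fun t => (hh.differentiable one_ne_zero t).hasDerivAt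
  have hgdc : Continuous (deriv g) := hg.continuous_deriv le_rfl
  have hhdc : Continuous (deriv h) := hh.continuous_deriv le_rfl
  -- the product has compact support
  have hP : HasCompactSupport (fun t => g t * h t) := hsupp.mul_left
  have hPd : ∀ t, HasDerivAt (fun t => g t * h t) (deriv g t * h t + g t * deriv h t) t :=
    fun t => (hgd t).mul (hhd t)
  have hPderiv : deriv (fun t => g t * h t) = fun t => deriv g t * h t + g t * deriv h t := by
    funext t; exact (hPd t).deriv
  have hPd_supp : HasCompactSupport (deriv (fun t => g t * h t)) := hP.deriv
  -- integral of derivative of compactly supported C¹ function is zero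
  obtain ⟨R, hR⟩ : ∃ R : ℝ, 0 < R ∧ tsupport (fun t => g t * h t) ⊆ Set.Ioo (-R) R := by
    obtain ⟨R, hRb⟩ := hP.isCompact.isBounded.subset_ball 0
    refine ⟨|R| + 1, by positivity, ?_⟩
    intro x hx
    have hb := hRb hx
    simp only [Metric.mem_ball, Real.dist_eq, sub_zero] at hb
    have : |x| < |R| + 1 := lt_of_lt_of_le hb (by linarith [le_abs_self R])
    constructor <;> [linarith [neg_abs_le x]; linarith [le_abs_self x]]
  have hzero : ∫ t, deriv (fun t => g t * h t) t = 0 := by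
    have hsub : Function.support (deriv (fun t => g t * h t)) ⊆ Set.Ioc (-R) R :=
      (support_deriv_subset).trans (hR.2.trans Set.Ioo_subset_Ioc_self)
    rw [← MeasureTheory.setIntegral_eq_integral_of_forall_compl_eq_zero
      (fun x hx => Function.notMem_support.mp (fun hc => hx (hsub hc)))]
    rw [← intervalIntegral.integral_of_le (by linarith [hR.1] : -R ≤ R)]
    have hii : IntervalIntegrable (deriv (fun t => g t * h t)) volume (-R) R := by
      rw [hPderiv]
      exact ((hgdc.mul hhc).add (hgc.mul hhdc)).intervalIntegrable _ _
    have := intervalIntegral.integral_eq_sub_of_hasDerivAt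
      (f := fun t => g t * h t) (f' := deriv (fun t => g t * h t))
      (fun s _ => by rw [hPderiv]; exact hPd s) hii
    rw [this]
    have h1 : g R * h R = 0 := by
      have hnm : R ∉ tsupport (fun t => g t * h t) := fun hc => by
        have := hR.2 hc; exact absurd this.2 (lt_irrefl R)
      exact image_eq_zero_of_notMem_tsupport (f := fun t => g t * h t) hnm
    have h2 : g (-R) * h (-R) = 0 := by
      have hnm : -R ∉ tsupport (fun t => g t * h t) := fun hc => by
        have := hR.2 hc; exact absurd this.1 (lt_irrefl (-R))
      exact image_eq_zero_of_notMem_tsupport (f := fun t => g t * h t) hnm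
    simp only [h1, h2, sub_zero]
  -- split the integral
  have hint1 : Integrable (fun t => deriv g t * h t) volume :=
    (hgdc.mul hhc).integrable_of_hasCompactSupport hsupp.mul_left
  have hint2 : Integrable (fun t => g t * deriv h t) volume :=
    (hgc.mul hhdc).integrable_of_hasCompactSupport hsupp.deriv.mul_left
  have : ∫ t, (deriv g t * h t + g t * deriv h t) = 0 := by
    rw [← hzero]
    congr 1
    funext t
    rw [hPderiv]
  rw [integral_add hint1 hint2] at this
  linarith



lemma mk3_line0 (t b c : ℝ) : mk3 t b c = mk3 0 b c + t • (Pi.single 0 1 : Fin 3 → ℝ) := by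
  funext j; fin_cases j <;> simp [mk3]

lemma mk3_line1 (a t c : ℝ) : mk3 a t c = mk3 a 0 c + t • (Pi.single 1 1 : Fin 3 → ℝ) := by
  funext j; fin_cases j <;> simp [mk3]

lemma mk3_line2 (a b t : ℝ) : mk3 a b t = mk3 a b 0 + t • (Pi.single 2 1 : Fin 3 → ℝ) := by
  funext j; fin_cases j <;> simp [mk3]

lemma hasDerivAt_comp_line {u : (Fin 3 → ℝ) → ℝ} (hu : Differentiable ℝ u)
    (c v : Fin 3 → ℝ) (t : ℝ) :
    HasDerivAt (fun s => u (c + s • v)) (fderiv ℝ u (c + t • v) v) t := by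
  have h1 : HasDerivAt (fun s : ℝ => c + s • v) v t := by
    simpa using ((hasDerivAt_id t).smul_const v).const_add c
  exact (hu _).hasFDerivAt.comp_hasDerivAt t h1

lemma hasDerivAt_line0 {u : (Fin 3 → ℝ) → ℝ} (hu : Differentiable ℝ u) (b c t : ℝ) :
    HasDerivAt (fun s => u (mk3 s b c)) (pd 0 u (mk3 t b c)) t := by
  have := hasDerivAt_comp_line hu (mk3 0 b c) (Pi.single 0 1) t
  simp only [← mk3_line0] at this
  exact this

lemma hasDerivAt_line1 {u : (Fin 3 → ℝ) → ℝ} (hu : Differentiable ℝ u) (a c t : ℝ) :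
    HasDerivAt (fun s => u (mk3 a s c)) (pd 1 u (mk3 a t c)) t := by
  have := hasDerivAt_comp_line hu (mk3 a 0 c) (Pi.single 1 1) t
  simp only [← mk3_line1] at this
  exact this

lemma hasDerivAt_line2 {u : (Fin 3 → ℝ) → ℝ} (hu : Differentiable ℝ u) (a b t : ℝ) :
    HasDerivAt (fun s => u (mk3 a b s)) (pd 2 u (mk3 a b t)) t := by
  have := hasDerivAt_comp_line hu (mk3 a b 0) (Pi.single 2 1) t
  simp only [← mk3_line2] at this
  exact this

lemma contDiff_pd {u : (Fin 3 → ℝ) → ℝ} (hu : ContDiff ℝ 3 u) (i : Fin 3) :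
    ContDiff ℝ 2 (pd i u) := by
  have h := hu.fderiv_right (m := 2) (by norm_num)
  exact h.clm_apply contDiff_const

lemma pd_comm {u : (Fin 3 → ℝ) → ℝ} (hu : ContDiff ℝ 3 u) (i j : Fin 3) :
    pd i (pd j u) = pd j (pd i u) := by
  funext x
  have hdiff : Differentiable ℝ u := hu.differentiable (by norm_num)
  have hf' : ContDiff ℝ 2 (fderiv ℝ u) := hu.fderiv_right (m := 2) (by norm_num)
  have hfd : ∀ y, HasFDerivAt u (fderiv ℝ u y) y := fun y => (hdiff y).hasFDerivAt
  have hf'' : HasFDerivAt (fderiv ℝ u) (fderiv ℝ (fderiv ℝ u) x) x :=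
    ((hf'.differentiable (by norm_num)) x).hasFDerivAt
  have hsymm := second_derivative_symmetric hfd hf''
  have key : ∀ k l : Fin 3, pd k (pd l u) x
      = fderiv ℝ (fderiv ℝ u) x (Pi.single k 1) (Pi.single l 1) := by
    intro k l
    show fderiv ℝ (fun y => fderiv ℝ u y (Pi.single l 1)) x (Pi.single k 1) = _
    rw [fderiv_clm_apply ((hf'.differentiable (by norm_num)) x) (differentiableAt_const _)]
    simp
  rw [key i j, key j i, hsymm]



/-! basic ENNReal helpers -/

lemma enn_sq (x : ℝ) : ((‖x‖₊ : ℝ≥0∞))^(2:ℕ) = ENNReal.ofReal (x^2) := by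
  rw [← enorm_eq_nnnorm, Real.enorm_eq_ofReal_abs, ← ENNReal.ofReal_pow (abs_nonneg x), sq_abs]

lemma enn_mul (x y : ℝ) : ((‖x * y‖₊ : ℝ≥0∞)) = (‖x‖₊ : ℝ≥0∞) * (‖y‖₊ : ℝ≥0∞) := by
  rw [nnnorm_mul, ENNReal.coe_mul]

/-- Cauchy–Schwarz for lintegrals -/
lemma lint_CS {α : Type*} [MeasurableSpace α] (μ : Measure α) {F G : α → ℝ≥0∞}
    (hF : AEMeasurable F μ) (hG : AEMeasurable G μ) :
    ∫⁻ a, F a * G a ∂μ ≤ (∫⁻ a, (F a)^(2:ℕ) ∂μ)^(1/2:ℝ) * (∫⁻ a, (G a)^(2:ℕ) ∂μ)^(1/2:ℝ) := by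
  have hconj : (2:ℝ).HolderConjugate 2 := Real.HolderConjugate.two_two
  have h := ENNReal.lintegral_mul_le_Lp_mul_Lq μ hconj hF hG
  simp only [Pi.mul_apply] at h
  calc ∫⁻ a, F a * G a ∂μ ≤ (∫⁻ a, F a ^ (2:ℝ) ∂μ) ^ (1/(2:ℝ)) * (∫⁻ a, G a ^ (2:ℝ) ∂μ) ^ (1/(2:ℝ)) := h
    _ = (∫⁻ a, (F a)^(2:ℕ) ∂μ)^(1/2:ℝ) * (∫⁻ a, (G a)^(2:ℕ) ∂μ)^(1/2:ℝ) := by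
        congr 1 <;> · congr 1; refine lintegral_congr fun a => ?_
                      rw [← ENNReal.rpow_natCast]; norm_num


/-! a.e. slicing and line lemmas -/

lemma integrable_of_cont {g : ℝ → ℝ} (hc : Continuous g)
    (h : ∫⁻ t, (‖g t‖₊ : ℝ≥0∞) < ⊤) : Integrable g volume :=
  ⟨hc.aestronglyMeasurable, h⟩

lemma ae_slice_lt_top (i : Fin 3) (F : (Fin 3 → ℝ) → ℝ≥0∞) (hF : Measurable F)
    (hfin : ∫⁻ x, F x ≠ ⊤) :
    ∀ᵐ z : ℝ × ℝ, ∫⁻ t, F ((eqv i).symm (t, z)) < ⊤ := by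
  rw [lint_slice i F hF] at hfin
  have hmeas : Measurable (fun z : ℝ × ℝ => ∫⁻ t, F ((eqv i).symm (t, z))) := by
    exact Measurable.lintegral_prod_left' (f := fun p : ℝ × (ℝ × ℝ) => F ((eqv i).symm p))
      (hF.comp (eqv i).symm.measurable)
  exact ae_lt_top hmeas hfin

lemma ae_snd_pair {p : ℝ → Prop} (h : ∀ᵐ b : ℝ, p b) : ∀ᵐ z : ℝ × ℝ, p z.2 := by
  rw [Measure.volume_eq_prod]
  exact Measure.quasiMeasurePreserving_snd.ae h

lemma hcs_line2 {f : (Fin 3 → ℝ) → ℝ} (hfs : HasCompactSupport f) (a b : ℝ) :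
    HasCompactSupport fun t => f (mk3 a b t) := by
  apply HasCompactSupport.intro (hfs.image (continuous_apply (2 : Fin 3)))
  intro t ht
  by_contra hne
  exact ht ⟨mk3 a b t, subset_tsupport f hne, rfl⟩

/-- line `C¹` smoothness -/
lemma contDiff_line0 {v : (Fin 3 → ℝ) → ℝ} (hv : ContDiff ℝ 1 v) (b c : ℝ) :
    ContDiff ℝ 1 fun t => v (mk3 t b c) := by
  have hline : ContDiff ℝ 1 (fun t : ℝ => mk3 0 b c + t • (Pi.single 0 1 : Fin 3 → ℝ)) :=
    contDiff_const.add (contDiff_id.smul contDiff_const)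
  have h := hv.comp hline
  have he : (fun t => v (mk3 t b c))
      = fun t => v (mk3 0 b c + t • (Pi.single 0 1 : Fin 3 → ℝ)) := by
    funext t; rw [mk3_line0]
  rw [he]; exact h

lemma contDiff_line1 {v : (Fin 3 → ℝ) → ℝ} (hv : ContDiff ℝ 1 v) (a c : ℝ) :
    ContDiff ℝ 1 fun t => v (mk3 a t c) := by
  have hline : ContDiff ℝ 1 (fun t : ℝ => mk3 a 0 c + t • (Pi.single 1 1 : Fin 3 → ℝ)) :=
    contDiff_const.add (contDiff_id.smul contDiff_const)
  have h := hv.comp hline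
  have he : (fun t => v (mk3 a t c))
      = fun t => v (mk3 a 0 c + t • (Pi.single 1 1 : Fin 3 → ℝ)) := by
    funext t; rw [mk3_line1]
  rw [he]; exact h

lemma contDiff_line2 {v : (Fin 3 → ℝ) → ℝ} (hv : ContDiff ℝ 1 v) (a b : ℝ) :
    ContDiff ℝ 1 fun t => v (mk3 a b t) := by
  have hline : ContDiff ℝ 1 (fun t : ℝ => mk3 a b 0 + t • (Pi.single 2 1 : Fin 3 → ℝ)) :=
    contDiff_const.add (contDiff_id.smul contDiff_const)
  have h := hv.comp hline
  have he : (fun t => v (mk3 a b t))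
      = fun t => v (mk3 a b 0 + t • (Pi.single 2 1 : Fin 3 → ℝ)) := by
    funext t; rw [mk3_line2]
  rw [he]; exact h

/-- common core: turn the 1D Agmon bound into an `ℝ≥0∞` inequality along a line. -/
lemma line_bound_core {g g' : ℝ → ℝ} (hg : ContDiff ℝ 1 g) (hg' : Continuous g')
    (hd : ∀ t, HasDerivAt g (g' t) t)
    (h2 : ∫⁻ t, (‖g t‖₊ : ℝ≥0∞)^(2:ℕ) < ⊤)
    (h12 : ∫⁻ t, (‖g t‖₊ : ℝ≥0∞) * (‖g' t‖₊ : ℝ≥0∞) < ⊤) (a : ℝ) :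
    ENNReal.ofReal (g a ^ 2) ≤ 2 * ∫⁻ t, (‖g t‖₊ : ℝ≥0∞) * (‖g' t‖₊ : ℝ≥0∞) := by
  have hderiv : deriv g = g' := funext fun t => (hd t).deriv
  have hint2 : Integrable (fun t => g t ^ 2) volume := by
    apply integrable_of_cont (hg.continuous.pow 2)
    calc ∫⁻ t, (‖g t ^ 2‖₊ : ℝ≥0∞) = ∫⁻ t, (‖g t‖₊ : ℝ≥0∞)^(2:ℕ) := by
          refine lintegral_congr fun t => ?_
          rw [nnnorm_pow, ENNReal.coe_pow]
      _ < ⊤ := h2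
  have hint12 : Integrable (fun t => g t * deriv g t) volume := by
    rw [hderiv]
    apply integrable_of_cont (hg.continuous.mul hg')
    calc ∫⁻ t, (‖g t * g' t‖₊ : ℝ≥0∞) = ∫⁻ t, (‖g t‖₊ : ℝ≥0∞) * (‖g' t‖₊ : ℝ≥0∞) := by
          refine lintegral_congr fun t => ?_; exact enn_mul _ _
      _ < ⊤ := h12
  have key := oneD_sq_le hg hint2 hint12 a
  calc ENNReal.ofReal (g a ^ 2) ≤ ENNReal.ofReal (2 * ∫ t, |g t * deriv g t|) :=
        ENNReal.ofReal_le_ofReal key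
    _ = 2 * ENNReal.ofReal (∫ t, |g t * deriv g t|) := by
        rw [ENNReal.ofReal_mul (by norm_num : (0:ℝ) ≤ 2)]
        norm_num
    _ = 2 * ∫⁻ t, ENNReal.ofReal (|g t * deriv g t|) := by
        rw [ofReal_integral_eq_lintegral_ofReal hint12.abs
          (Filter.Eventually.of_forall fun t => abs_nonneg _)]
    _ = 2 * ∫⁻ t, (‖g t‖₊ : ℝ≥0∞) * (‖g' t‖₊ : ℝ≥0∞) := by
        congr 1
        refine lintegral_congr fun t => ?_
        rw [← Real.enorm_eq_ofReal_abs, enorm_eq_nnnorm, enn_mul, hderiv]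

lemma continuous_mk3_line0 (b c : ℝ) : Continuous fun t : ℝ => mk3 t b c := by
  have := continuous_mk3.comp (f := fun t : ℝ => (t, b, c))
    (continuous_id.prodMk continuous_const)
  exact this

lemma continuous_mk3_line1 (a c : ℝ) : Continuous fun t : ℝ => mk3 a t c := by
  have := continuous_mk3.comp (f := fun t : ℝ => (a, t, c))
    (continuous_const.prodMk (continuous_id.prodMk continuous_const))
  exact this

lemma continuous_mk3_line2 (a b : ℝ) : Continuous fun t : ℝ => mk3 a b t := by
  have := continuous_mk3.comp (f := fun t : ℝ => (a, b, t))
    (continuous_const.prodMk (continuous_const.prodMk continuous_id))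
  exact this

/-- a.e. lines in direction 0 satisfy the Agmon bound -/
lemma ae_line0 {v : (Fin 3 → ℝ) → ℝ} (hv : ContDiff ℝ 1 v) (hpd : Continuous (pd 0 v))
    (hQ : ∫⁻ x, (‖v x‖₊ : ℝ≥0∞)^(2:ℕ) ≠ ⊤)
    (hR : ∫⁻ x, (‖v x‖₊ : ℝ≥0∞) * (‖pd 0 v x‖₊ : ℝ≥0∞) ≠ ⊤) :
    ∀ᵐ z : ℝ × ℝ, ∀ a : ℝ, ENNReal.ofReal (v (mk3 a z.1 z.2) ^ 2)
      ≤ 2 * ∫⁻ t, (‖v (mk3 t z.1 z.2)‖₊ : ℝ≥0∞) * (‖pd 0 v (mk3 t z.1 z.2)‖₊ : ℝ≥0∞) := by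
  have h1 := ae_slice_lt_top 0 (fun x => (‖v x‖₊ : ℝ≥0∞)^(2:ℕ))
    ((hv.continuous.nnnorm.measurable.coe_nnreal_ennreal).pow_const 2) hQ
  have h2 := ae_slice_lt_top 0
    (fun x => (‖v x‖₊ : ℝ≥0∞) * (‖pd 0 v x‖₊ : ℝ≥0∞))
    ((hv.continuous.nnnorm.measurable.coe_nnreal_ennreal).mul
      (hpd.nnnorm.measurable.coe_nnreal_ennreal)) hR
  filter_upwards [h1, h2] with z hz1 hz2 a
  simp only [eqv0_symm] at hz1 hz2
  exact line_bound_core (contDiff_line0 hv z.1 z.2)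
    (hpd.comp (continuous_mk3_line0 z.1 z.2))
    (fun t => hasDerivAt_line0 (hv.differentiable one_ne_zero) z.1 z.2 t) hz1 hz2 a

/-- a.e. lines in direction 1 satisfy the Agmon bound -/
lemma ae_line1 {v : (Fin 3 → ℝ) → ℝ} (hv : ContDiff ℝ 1 v) (hpd : Continuous (pd 1 v))
    (hQ : ∫⁻ x, (‖v x‖₊ : ℝ≥0∞)^(2:ℕ) ≠ ⊤)
    (hR : ∫⁻ x, (‖v x‖₊ : ℝ≥0∞) * (‖pd 1 v x‖₊ : ℝ≥0∞) ≠ ⊤) :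
    ∀ᵐ z : ℝ × ℝ, ∀ b : ℝ, ENNReal.ofReal (v (mk3 z.1 b z.2) ^ 2)
      ≤ 2 * ∫⁻ t, (‖v (mk3 z.1 t z.2)‖₊ : ℝ≥0∞) * (‖pd 1 v (mk3 z.1 t z.2)‖₊ : ℝ≥0∞) := by
  have h1 := ae_slice_lt_top 1 (fun x => (‖v x‖₊ : ℝ≥0∞)^(2:ℕ))
    ((hv.continuous.nnnorm.measurable.coe_nnreal_ennreal).pow_const 2) hQ
  have h2 := ae_slice_lt_top 1
    (fun x => (‖v x‖₊ : ℝ≥0∞) * (‖pd 1 v x‖₊ : ℝ≥0∞))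
    ((hv.continuous.nnnorm.measurable.coe_nnreal_ennreal).mul
      (hpd.nnnorm.measurable.coe_nnreal_ennreal)) hR
  filter_upwards [h1, h2] with z hz1 hz2 b
  simp only [eqv1_symm] at hz1 hz2
  exact line_bound_core (contDiff_line1 hv z.1 z.2)
    (hpd.comp (continuous_mk3_line1 z.1 z.2))
    (fun t => hasDerivAt_line1 (hv.differentiable one_ne_zero) z.1 z.2 t) hz1 hz2 b

/-- every line in direction 2 of a compactly supported function satisfies the Agmon bound -/
lemma f_line2 {f : (Fin 3 → ℝ) → ℝ} (hf : ContDiff ℝ 1 f) (hfs : HasCompactSupport f)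
    (hpd : Continuous (pd 2 f)) (a b cc : ℝ) :
    ENNReal.ofReal (f (mk3 a b cc) ^ 2)
      ≤ 2 * ∫⁻ t, (‖f (mk3 a b t)‖₊ : ℝ≥0∞) * (‖pd 2 f (mk3 a b t)‖₊ : ℝ≥0∞) := by
  have hgc : Continuous fun t => f (mk3 a b t) := (contDiff_line2 hf a b).continuous
  have hg'c : Continuous fun t => pd 2 f (mk3 a b t) := hpd.comp (continuous_mk3_line2 a b)
  have hcs := hcs_line2 hfs a b
  -- compact support of the product lines
  have hfin2 : ∫⁻ t, (‖f (mk3 a b t)‖₊ : ℝ≥0∞)^(2:ℕ) < ⊤ := by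
    have : Integrable (fun t => f (mk3 a b t) ^ 2) volume :=
      (hgc.pow 2).integrable_of_hasCompactSupport (by
        have : HasCompactSupport ((fun t => f (mk3 a b t)) * (fun t => f (mk3 a b t))) :=
          hcs.mul_left
        have he : (fun t => f (mk3 a b t) ^ 2)
            = (fun t => f (mk3 a b t)) * (fun t => f (mk3 a b t)) := by
          funext t; simp only [Pi.mul_apply]; ring
        rw [sq]; exact this)
    have := this.2
    calc ∫⁻ t, (‖f (mk3 a b t)‖₊ : ℝ≥0∞)^(2:ℕ)
        = ∫⁻ t, (‖f (mk3 a b t) ^ 2‖₊ : ℝ≥0∞) := by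
          refine lintegral_congr fun t => ?_
          rw [nnnorm_pow, ENNReal.coe_pow]
      _ < ⊤ := this
  have hfin12 : ∫⁻ t, (‖f (mk3 a b t)‖₊ : ℝ≥0∞) * (‖pd 2 f (mk3 a b t)‖₊ : ℝ≥0∞) < ⊤ := by
    have : Integrable (fun t => f (mk3 a b t) * pd 2 f (mk3 a b t)) volume :=
      (hgc.mul hg'c).integrable_of_hasCompactSupport (by
        have he : (fun t => f (mk3 a b t) * pd 2 f (mk3 a b t))
            = (fun t => pd 2 f (mk3 a b t)) * (fun t => f (mk3 a b t)) := by
          funext t; simp only [Pi.mul_apply]; ring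
        exact hcs.mul_right)
    have h2 := this.2
    calc ∫⁻ t, (‖f (mk3 a b t)‖₊ : ℝ≥0∞) * (‖pd 2 f (mk3 a b t)‖₊ : ℝ≥0∞)
        = ∫⁻ t, (‖f (mk3 a b t) * pd 2 f (mk3 a b t)‖₊ : ℝ≥0∞) := by
          refine lintegral_congr fun t => ?_
          rw [enn_mul]
      _ < ⊤ := h2
  exact line_bound_core (contDiff_line2 hf a b) hg'c
    (fun t => hasDerivAt_line2 (hf.differentiable one_ne_zero) a b t) hfin2 hfin12 cc

lemma measurable_pair_line1 {v w : (Fin 3 → ℝ) → ℝ} (hv : Continuous v) (hw : Continuous w) :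
    Measurable (fun z : ℝ × ℝ =>
      ∫⁻ t, (‖v (mk3 z.1 t z.2)‖₊ : ℝ≥0∞) * (‖w (mk3 z.1 t z.2)‖₊ : ℝ≥0∞)) := by
  have hrearr : Continuous (fun p : ℝ × (ℝ × ℝ) => (p.2.1, p.1, p.2.2) : _) :=
    (continuous_snd.fst).prodMk (continuous_fst.prodMk continuous_snd.snd)
  have hmkA : Measurable (fun p : ℝ × (ℝ × ℝ) => mk3 p.2.1 p.1 p.2.2) :=
    (continuous_mk3.comp hrearr).measurable
  exact Measurable.lintegral_prod_left'
    (((hv.nnnorm.measurable.coe_nnreal_ennreal.comp hmkA)).mul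
      (hw.nnnorm.measurable.coe_nnreal_ennreal.comp hmkA))

lemma measurable_pair_line2 {v w : (Fin 3 → ℝ) → ℝ} (hv : Continuous v) (hw : Continuous w) :
    Measurable (fun z : ℝ × ℝ =>
      ∫⁻ t, (‖v (mk3 z.1 z.2 t)‖₊ : ℝ≥0∞) * (‖w (mk3 z.1 z.2 t)‖₊ : ℝ≥0∞)) := by
  have hrearr : Continuous (fun p : ℝ × (ℝ × ℝ) => (p.2.1, p.2.2, p.1) : _) :=
    (continuous_snd.fst).prodMk (continuous_snd.snd.prodMk continuous_fst)
  have hmkA : Measurable (fun p : ℝ × (ℝ × ℝ) => mk3 p.2.1 p.2.2 p.1) :=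
    (continuous_mk3.comp hrearr).measurable
  exact Measurable.lintegral_prod_left'
    (((hv.nnnorm.measurable.coe_nnreal_ennreal.comp hmkA)).mul
      (hw.nnnorm.measurable.coe_nnreal_ennreal.comp hmkA))

lemma contDiff_pd' {u : (Fin 3 → ℝ) → ℝ} (hu : ContDiff ℝ 2 u) (i : Fin 3) :
    ContDiff ℝ 1 (pd i u) := by
  have h := hu.fderiv_right (m := 1) (by norm_num)
  exact h.clm_apply contDiff_const

theorem key_P {u f : (Fin 3 → ℝ) → ℝ} (hu : ContDiff ℝ 3 u) (hf : ContDiff ℝ 2 f)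
    (hfs : HasCompactSupport f)
    (hQu : ∫⁻ x, (‖u x‖₊ : ℝ≥0∞)^(2:ℕ) ≠ ⊤)
    (hQ1 : ∫⁻ x, (‖pd 0 u x‖₊ : ℝ≥0∞)^(2:ℕ) ≠ ⊤)
    (hQ2 : ∫⁻ x, (‖pd 1 u x‖₊ : ℝ≥0∞)^(2:ℕ) ≠ ⊤)
    (hQ12 : ∫⁻ x, (‖pd 1 (pd 0 u) x‖₊ : ℝ≥0∞)^(2:ℕ) ≠ ⊤) :
    ∫⁻ x, (‖u x * f x‖₊ : ℝ≥0∞)^(2:ℕ) ≤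
      8 * (∫⁻ x, (‖u x‖₊ : ℝ≥0∞)^(2:ℕ))^(1/4:ℝ)
        * (∫⁻ x, (‖pd 0 u x‖₊ : ℝ≥0∞)^(2:ℕ))^(1/4:ℝ)
        * (∫⁻ x, (‖pd 1 u x‖₊ : ℝ≥0∞)^(2:ℕ))^(1/4:ℝ)
        * (∫⁻ x, (‖pd 1 (pd 0 u) x‖₊ : ℝ≥0∞)^(2:ℕ))^(1/4:ℝ)
        * (∫⁻ x, (‖f x‖₊ : ℝ≥0∞)^(2:ℕ))^(1/2:ℝ)
        * (∫⁻ x, (‖pd 2 f x‖₊ : ℝ≥0∞)^(2:ℕ))^(1/2:ℝ) := by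
  -- continuity facts
  have hcu : Continuous u := hu.continuous
  have hcf : Continuous f := hf.continuous
  have hpd0 : Continuous (pd 0 u) := (contDiff_pd hu 0).continuous
  have hpd1 : Continuous (pd 1 u) := (contDiff_pd hu 1).continuous
  have hcd10 : ContDiff ℝ 1 (pd 0 u) := (contDiff_pd hu 0).of_le (by norm_num)
  have hpd10 : Continuous (pd 1 (pd 0 u)) := (contDiff_pd' (contDiff_pd hu 0) 1).continuous
  have hpd2f : Continuous (pd 2 f) := (contDiff_pd' hf 2).continuous
  have hu1 : ContDiff ℝ 1 u := hu.of_le (by norm_num)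
  have hf1 : ContDiff ℝ 1 f := hf.of_le (by norm_num)
  -- measurability of the basic enorm functions
  have mu : Measurable fun x : Fin 3 → ℝ => (‖u x‖₊ : ℝ≥0∞) :=
    hcu.nnnorm.measurable.coe_nnreal_ennreal
  have m0 : Measurable fun x : Fin 3 → ℝ => (‖pd 0 u x‖₊ : ℝ≥0∞) :=
    hpd0.nnnorm.measurable.coe_nnreal_ennreal
  have m1 : Measurable fun x : Fin 3 → ℝ => (‖pd 1 u x‖₊ : ℝ≥0∞) :=
    hpd1.nnnorm.measurable.coe_nnreal_ennreal
  have m10 : Measurable fun x : Fin 3 → ℝ => (‖pd 1 (pd 0 u) x‖₊ : ℝ≥0∞) :=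
    hpd10.nnnorm.measurable.coe_nnreal_ennreal
  have mf : Measurable fun x : Fin 3 → ℝ => (‖f x‖₊ : ℝ≥0∞) :=
    hcf.nnnorm.measurable.coe_nnreal_ennreal
  have m2f : Measurable fun x : Fin 3 → ℝ => (‖pd 2 f x‖₊ : ℝ≥0∞) :=
    hpd2f.nnnorm.measurable.coe_nnreal_ennreal
  -- abbreviations
  set Qu := ∫⁻ x, (‖u x‖₊ : ℝ≥0∞)^(2:ℕ) with hQu_def
  set Q1 := ∫⁻ x, (‖pd 0 u x‖₊ : ℝ≥0∞)^(2:ℕ) with hQ1_def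
  set Q2 := ∫⁻ x, (‖pd 1 u x‖₊ : ℝ≥0∞)^(2:ℕ) with hQ2_def
  set Q12 := ∫⁻ x, (‖pd 1 (pd 0 u) x‖₊ : ℝ≥0∞)^(2:ℕ) with hQ12_def
  set Qf := ∫⁻ x, (‖f x‖₊ : ℝ≥0∞)^(2:ℕ) with hQf_def
  set Q2f := ∫⁻ x, (‖pd 2 f x‖₊ : ℝ≥0∞)^(2:ℕ) with hQ2f_def
  -- global Cauchy-Schwarz bounds
  have R01le : ∫⁻ x, (‖u x‖₊ : ℝ≥0∞) * (‖pd 0 u x‖₊ : ℝ≥0∞)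
      ≤ Qu^(1/2:ℝ) * Q1^(1/2:ℝ) := lint_CS volume mu.aemeasurable m0.aemeasurable
  have R02le : ∫⁻ x, (‖u x‖₊ : ℝ≥0∞) * (‖pd 1 u x‖₊ : ℝ≥0∞)
      ≤ Qu^(1/2:ℝ) * Q2^(1/2:ℝ) := lint_CS volume mu.aemeasurable m1.aemeasurable
  have R11le : ∫⁻ x, (‖pd 0 u x‖₊ : ℝ≥0∞) * (‖pd 1 (pd 0 u) x‖₊ : ℝ≥0∞)
      ≤ Q1^(1/2:ℝ) * Q12^(1/2:ℝ) := lint_CS volume m0.aemeasurable m10.aemeasurable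
  have Rfle : ∫⁻ x, (‖f x‖₊ : ℝ≥0∞) * (‖pd 2 f x‖₊ : ℝ≥0∞)
      ≤ Qf^(1/2:ℝ) * Q2f^(1/2:ℝ) := lint_CS volume mf.aemeasurable m2f.aemeasurable
  have hR01 : ∫⁻ x, (‖u x‖₊ : ℝ≥0∞) * (‖pd 0 u x‖₊ : ℝ≥0∞) ≠ ⊤ :=
    ne_top_of_le_ne_top (ENNReal.mul_ne_top (ENNReal.rpow_ne_top_of_nonneg (by norm_num) hQu)
      (ENNReal.rpow_ne_top_of_nonneg (by norm_num) hQ1)) R01le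
  have hR02 : ∫⁻ x, (‖u x‖₊ : ℝ≥0∞) * (‖pd 1 u x‖₊ : ℝ≥0∞) ≠ ⊤ :=
    ne_top_of_le_ne_top (ENNReal.mul_ne_top (ENNReal.rpow_ne_top_of_nonneg (by norm_num) hQu)
      (ENNReal.rpow_ne_top_of_nonneg (by norm_num) hQ2)) R02le
  have hR11 : ∫⁻ x, (‖pd 0 u x‖₊ : ℝ≥0∞) * (‖pd 1 (pd 0 u) x‖₊ : ℝ≥0∞) ≠ ⊤ :=
    ne_top_of_le_ne_top (ENNReal.mul_ne_top (ENNReal.rpow_ne_top_of_nonneg (by norm_num) hQ1)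
      (ENNReal.rpow_ne_top_of_nonneg (by norm_num) hQ12)) R11le
  -- a.e. line bounds
  have hA0 := ae_line0 hu1 hpd0 hQu hR01
  have hA1u := ae_line1 hu1 hpd1 hQu hR02
  have hA1d := ae_line1 hcd10 hpd10 hQ1 hR11
  -- the slice quantities
  set L0 : ℝ × ℝ → ℝ≥0∞ := fun z =>
    ∫⁻ t, (‖u (mk3 t z.1 z.2)‖₊ : ℝ≥0∞) * (‖pd 0 u (mk3 t z.1 z.2)‖₊ : ℝ≥0∞) with hL0_def
  set L1u : ℝ × ℝ → ℝ≥0∞ := fun z =>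
    ∫⁻ t, (‖u (mk3 z.1 t z.2)‖₊ : ℝ≥0∞) * (‖pd 1 u (mk3 z.1 t z.2)‖₊ : ℝ≥0∞) with hL1u_def
  set L1d : ℝ × ℝ → ℝ≥0∞ := fun z =>
    ∫⁻ t, (‖pd 0 u (mk3 z.1 t z.2)‖₊ : ℝ≥0∞) * (‖pd 1 (pd 0 u) (mk3 z.1 t z.2)‖₊ : ℝ≥0∞)
    with hL1d_def
  set U : ℝ × ℝ → ℝ≥0∞ := fun z => ∫⁻ cc, (‖u (mk3 z.1 z.2 cc)‖₊ : ℝ≥0∞)^(2:ℕ) with hU_def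
  set G : ℝ × ℝ → ℝ≥0∞ := fun z =>
    ∫⁻ t, (‖f (mk3 z.1 z.2 t)‖₊ : ℝ≥0∞) * (‖pd 2 f (mk3 z.1 z.2 t)‖₊ : ℝ≥0∞) with hG_def
  set M : ℝ≥0∞ := 4 * (Qu^(1/4:ℝ) * Q1^(1/4:ℝ) * Q2^(1/4:ℝ) * Q12^(1/4:ℝ)) with hM_def
  have hmk3cont : Continuous (fun p : ℝ × ℝ × ℝ => mk3 p.1 p.2.1 p.2.2) := continuous_mk3
  -- step A : for every b, the (c,s)-plane L² mass of u is ≤ 2 * R02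
  have hAb : ∀ b : ℝ, (∫⁻ q : ℝ × ℝ, (‖u (mk3 q.2 b q.1)‖₊ : ℝ≥0∞)^(2:ℕ))
      ≤ 2 * ∫⁻ x, (‖u x‖₊ : ℝ≥0∞) * (‖pd 1 u x‖₊ : ℝ≥0∞) := by
    intro b
    have hswap : ∀ᵐ q : ℝ × ℝ, ∀ bb : ℝ,
        ENNReal.ofReal (u (mk3 q.2 bb q.1) ^ 2) ≤ 2 * L1u q.swap := by
      rw [Measure.volume_eq_prod] at hA1u ⊢
      exact (Measure.measurePreserving_swap).quasiMeasurePreserving.ae hA1u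
    have mL1u : Measurable L1u := by
      rw [hL1u_def]; exact measurable_pair_line1 hcu hpd1
    calc ∫⁻ q : ℝ × ℝ, (‖u (mk3 q.2 b q.1)‖₊ : ℝ≥0∞)^(2:ℕ)
        = ∫⁻ q : ℝ × ℝ, ENNReal.ofReal (u (mk3 q.2 b q.1) ^ 2) := by
          refine lintegral_congr fun q => ?_; exact enn_sq _
      _ ≤ ∫⁻ q : ℝ × ℝ, 2 * L1u q.swap :=
          lintegral_mono_ae (hswap.mono fun q hq => hq b)
      _ = 2 * ∫⁻ q : ℝ × ℝ, L1u q.swap := lintegral_const_mul' 2 _ (by norm_num)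
      _ = 2 * ∫⁻ z : ℝ × ℝ, L1u z := by
          congr 1
          rw [Measure.volume_eq_prod]
          exact (Measure.measurePreserving_swap).lintegral_comp mL1u
      _ = 2 * ∫⁻ x, (‖u x‖₊ : ℝ≥0∞) * (‖pd 1 u x‖₊ : ℝ≥0∞) := by
          congr 1
          exact (lint_slice1 _ (mu.mul m1)).symm
  -- step B : same for pd 0 u with pd 1 (pd 0 u)
  have hBb : ∀ b : ℝ, (∫⁻ q : ℝ × ℝ, (‖pd 0 u (mk3 q.2 b q.1)‖₊ : ℝ≥0∞)^(2:ℕ))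
      ≤ 2 * ∫⁻ x, (‖pd 0 u x‖₊ : ℝ≥0∞) * (‖pd 1 (pd 0 u) x‖₊ : ℝ≥0∞) := by
    intro b
    have hswap : ∀ᵐ q : ℝ × ℝ, ∀ bb : ℝ,
        ENNReal.ofReal (pd 0 u (mk3 q.2 bb q.1) ^ 2) ≤ 2 * L1d q.swap := by
      rw [Measure.volume_eq_prod] at hA1d ⊢
      exact (Measure.measurePreserving_swap).quasiMeasurePreserving.ae hA1d
    have mL1d : Measurable L1d := by
      rw [hL1d_def]; exact measurable_pair_line1 hpd0 hpd10
    calc ∫⁻ q : ℝ × ℝ, (‖pd 0 u (mk3 q.2 b q.1)‖₊ : ℝ≥0∞)^(2:ℕ)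
        = ∫⁻ q : ℝ × ℝ, ENNReal.ofReal (pd 0 u (mk3 q.2 b q.1) ^ 2) := by
          refine lintegral_congr fun q => ?_; exact enn_sq _
      _ ≤ ∫⁻ q : ℝ × ℝ, 2 * L1d q.swap :=
          lintegral_mono_ae (hswap.mono fun q hq => hq b)
      _ = 2 * ∫⁻ q : ℝ × ℝ, L1d q.swap := lintegral_const_mul' 2 _ (by norm_num)
      _ = 2 * ∫⁻ z : ℝ × ℝ, L1d z := by
          congr 1
          rw [Measure.volume_eq_prod]
          exact (Measure.measurePreserving_swap).lintegral_comp mL1d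
      _ = 2 * ∫⁻ x, (‖pd 0 u x‖₊ : ℝ≥0∞) * (‖pd 1 (pd 0 u) x‖₊ : ℝ≥0∞) := by
          congr 1
          exact (lint_slice1 _ (m0.mul m10)).symm
  -- step W : a.e. b, the slice mass U(a,b) is bounded by M for all a
  have h0' : ∀ᵐ b : ℝ, ∀ᵐ c : ℝ, ∀ a : ℝ,
      ENNReal.ofReal (u (mk3 a b c) ^ 2) ≤ 2 * L0 (b, c) := by
    rw [Measure.volume_eq_prod] at hA0
    exact Measure.ae_ae_of_ae_prod hA0
  have hW : ∀ᵐ b : ℝ, ∀ a : ℝ, U (a, b) ≤ M := by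
    filter_upwards [h0'] with b hb a
    have hrearr2 : Continuous (fun q : ℝ × ℝ => ((q.2, b, q.1) : ℝ × ℝ × ℝ)) :=
      continuous_snd.prodMk (continuous_const.prodMk continuous_fst)
    have hmkB : Measurable fun q : ℝ × ℝ => mk3 q.2 b q.1 :=
      (continuous_mk3.comp hrearr2).measurable
    have step1 : U (a, b) ≤ 2 * ∫⁻ cc, L0 (b, cc) := by
      calc U (a, b) = ∫⁻ cc, ENNReal.ofReal (u (mk3 a b cc) ^ 2) := by
            rw [hU_def]; exact lintegral_congr fun cc => enn_sq _
        _ ≤ ∫⁻ cc, 2 * L0 (b, cc) := lintegral_mono_ae (hb.mono fun c hc => hc a)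
        _ = 2 * ∫⁻ cc, L0 (b, cc) := lintegral_const_mul' 2 _ (by norm_num)
    have hplane : ∫⁻ cc, L0 (b, cc)
        = ∫⁻ q : ℝ × ℝ, (‖u (mk3 q.2 b q.1)‖₊ : ℝ≥0∞) * (‖pd 0 u (mk3 q.2 b q.1)‖₊ : ℝ≥0∞) := by
      rw [Measure.volume_eq_prod, lintegral_prod
        (f := fun q : ℝ × ℝ => (‖u (mk3 q.2 b q.1)‖₊ : ℝ≥0∞) * (‖pd 0 u (mk3 q.2 b q.1)‖₊ : ℝ≥0∞))
        (by exact ((mu.comp hmkB).mul (m0.comp hmkB)).aemeasurable)]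
    have hCS := lint_CS (volume : Measure (ℝ × ℝ))
      (F := fun q : ℝ × ℝ => (‖u (mk3 q.2 b q.1)‖₊ : ℝ≥0∞))
      (G := fun q : ℝ × ℝ => (‖pd 0 u (mk3 q.2 b q.1)‖₊ : ℝ≥0∞))
      (mu.comp hmkB).aemeasurable (m0.comp hmkB).aemeasurable
    have h2half : (2:ℝ≥0∞)^(1/2:ℝ) * (2:ℝ≥0∞)^(1/2:ℝ) = 2 := by
      rw [← ENNReal.rpow_add _ _ (by norm_num) (by norm_num)]; norm_num
    calc U (a, b) ≤ 2 * ∫⁻ cc, L0 (b, cc) := step1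
      _ = 2 * ∫⁻ q : ℝ × ℝ, (‖u (mk3 q.2 b q.1)‖₊ : ℝ≥0∞)
            * (‖pd 0 u (mk3 q.2 b q.1)‖₊ : ℝ≥0∞) := by rw [hplane]
      _ ≤ 2 * ((∫⁻ q : ℝ × ℝ, (‖u (mk3 q.2 b q.1)‖₊ : ℝ≥0∞)^(2:ℕ))^(1/2:ℝ)
            * (∫⁻ q : ℝ × ℝ, (‖pd 0 u (mk3 q.2 b q.1)‖₊ : ℝ≥0∞)^(2:ℕ))^(1/2:ℝ)) :=
          mul_le_mul_right hCS 2
      _ ≤ 2 * ((2 * ∫⁻ x, (‖u x‖₊ : ℝ≥0∞) * (‖pd 1 u x‖₊ : ℝ≥0∞))^(1/2:ℝ)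
            * (2 * ∫⁻ x, (‖pd 0 u x‖₊ : ℝ≥0∞) * (‖pd 1 (pd 0 u) x‖₊ : ℝ≥0∞))^(1/2:ℝ)) := by
          exact mul_le_mul_right (mul_le_mul'
            (ENNReal.rpow_le_rpow (hAb b) (by norm_num))
            (ENNReal.rpow_le_rpow (hBb b) (by norm_num))) 2
      _ ≤ 2 * ((2 * (Qu^(1/2:ℝ) * Q2^(1/2:ℝ)))^(1/2:ℝ)
            * (2 * (Q1^(1/2:ℝ) * Q12^(1/2:ℝ)))^(1/2:ℝ)) := by
          exact mul_le_mul_right (mul_le_mul'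
            (ENNReal.rpow_le_rpow (mul_le_mul_right R02le 2) (by norm_num))
            (ENNReal.rpow_le_rpow (mul_le_mul_right R11le 2) (by norm_num))) 2
      _ = M := by
          have e1 : ∀ X : ℝ≥0∞, (X^(1/2:ℝ))^(1/2:ℝ) = X^(1/4:ℝ) := fun X => by
            rw [← ENNReal.rpow_mul]; norm_num
          rw [ENNReal.mul_rpow_of_nonneg _ _ (by norm_num : (0:ℝ) ≤ 1/2),
            ENNReal.mul_rpow_of_nonneg _ _ (by norm_num : (0:ℝ) ≤ 1/2),
            ENNReal.mul_rpow_of_nonneg _ _ (by norm_num : (0:ℝ) ≤ 1/2),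
            ENNReal.mul_rpow_of_nonneg _ _ (by norm_num : (0:ℝ) ≤ 1/2),
            e1, e1, e1, e1, hM_def]
          have e2 : (2:ℝ≥0∞) * (2^(1/2:ℝ) * (Qu^(1/4:ℝ) * Q2^(1/4:ℝ))
              * (2^(1/2:ℝ) * (Q1^(1/4:ℝ) * Q12^(1/4:ℝ))))
              = 2^(1/2:ℝ) * 2^(1/2:ℝ)
                * (2 * (Qu^(1/4:ℝ) * Q1^(1/4:ℝ) * Q2^(1/4:ℝ) * Q12^(1/4:ℝ))) := by ring
          rw [e2, h2half, ← mul_assoc]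
          norm_num
  -- upgrade to a.e. on the plane
  have hUae : ∀ᵐ z : ℝ × ℝ, U z ≤ M := by
    have h := ae_snd_pair (p := fun b => ∀ a, U (a, b) ≤ M) hW
    filter_upwards [h] with z hz
    exact hz z.1
  -- main chain
  have mG : Measurable G := by rw [hG_def]; exact measurable_pair_line2 hcf hpd2f
  have muf : Measurable fun x : Fin 3 → ℝ => (‖u x * f x‖₊ : ℝ≥0∞)^(2:ℕ) :=
    ((hcu.mul hcf).nnnorm.measurable.coe_nnreal_ennreal).pow_const 2
  have hMne : M ≠ ⊤ := by
    rw [hM_def]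
    exact ENNReal.mul_ne_top (by norm_num)
      (ENNReal.mul_ne_top (ENNReal.mul_ne_top
        (ENNReal.mul_ne_top (ENNReal.rpow_ne_top_of_nonneg (by norm_num) hQu)
          (ENNReal.rpow_ne_top_of_nonneg (by norm_num) hQ1))
        (ENNReal.rpow_ne_top_of_nonneg (by norm_num) hQ2))
        (ENNReal.rpow_ne_top_of_nonneg (by norm_num) hQ12))
  have hinner : ∀ z : ℝ × ℝ,
      (∫⁻ cc, (‖u (mk3 z.1 z.2 cc) * f (mk3 z.1 z.2 cc)‖₊ : ℝ≥0∞)^(2:ℕ)) ≤ (2 * G z) * U z := by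
    intro z
    have mUz : AEMeasurable (fun cc : ℝ => (‖u (mk3 z.1 z.2 cc)‖₊ : ℝ≥0∞)^(2:ℕ)) volume :=
      (((hcu.comp (continuous_mk3_line2 z.1 z.2)).nnnorm.measurable.coe_nnreal_ennreal).pow_const
        2).aemeasurable
    calc ∫⁻ cc, (‖u (mk3 z.1 z.2 cc) * f (mk3 z.1 z.2 cc)‖₊ : ℝ≥0∞)^(2:ℕ)
        = ∫⁻ cc, (‖u (mk3 z.1 z.2 cc)‖₊ : ℝ≥0∞)^(2:ℕ)
            * ENNReal.ofReal (f (mk3 z.1 z.2 cc) ^ 2) := by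
          refine lintegral_congr fun cc => ?_
          rw [enn_mul, mul_pow, enn_sq, enn_sq]
      _ ≤ ∫⁻ cc, (‖u (mk3 z.1 z.2 cc)‖₊ : ℝ≥0∞)^(2:ℕ) * (2 * G z) := by
          refine lintegral_mono fun cc => mul_le_mul_right ?_ _
          have := f_line2 hf1 hfs hpd2f z.1 z.2 cc
          rw [hG_def]
          exact this
      _ = (∫⁻ cc, (‖u (mk3 z.1 z.2 cc)‖₊ : ℝ≥0∞)^(2:ℕ)) * (2 * G z) :=
          lintegral_mul_const'' _ mUz
      _ = (2 * G z) * U z := by rw [hU_def]; exact mul_comm _ _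
  have hGid : ∫⁻ z : ℝ × ℝ, G z = ∫⁻ x, (‖f x‖₊ : ℝ≥0∞) * (‖pd 2 f x‖₊ : ℝ≥0∞) := by
    rw [hG_def]
    exact (lint_slice2 _ (mf.mul m2f)).symm
  calc ∫⁻ x, (‖u x * f x‖₊ : ℝ≥0∞)^(2:ℕ)
      = ∫⁻ z : ℝ × ℝ, ∫⁻ cc, (‖u (mk3 z.1 z.2 cc) * f (mk3 z.1 z.2 cc)‖₊ : ℝ≥0∞)^(2:ℕ) :=
        lint_slice2 _ muf
    _ ≤ ∫⁻ z : ℝ × ℝ, (2 * G z) * U z := lintegral_mono fun z => hinner z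
    _ ≤ ∫⁻ z : ℝ × ℝ, (2 * G z) * M :=
        lintegral_mono_ae (hUae.mono fun z hz => mul_le_mul_right hz _)
    _ = ∫⁻ z : ℝ × ℝ, (2 * M) * G z := lintegral_congr fun z => by ring
    _ = (2 * M) * ∫⁻ z : ℝ × ℝ, G z :=
        lintegral_const_mul' _ _ (ENNReal.mul_ne_top (by norm_num) hMne)
    _ = (2 * M) * ∫⁻ x, (‖f x‖₊ : ℝ≥0∞) * (‖pd 2 f x‖₊ : ℝ≥0∞) := by rw [hGid]
    _ ≤ (2 * M) * (Qf^(1/2:ℝ) * Q2f^(1/2:ℝ)) := mul_le_mul_right Rfle _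
    _ = 8 * Qu^(1/4:ℝ) * Q1^(1/4:ℝ) * Q2^(1/4:ℝ) * Q12^(1/4:ℝ) * Qf^(1/2:ℝ) * Q2f^(1/2:ℝ) := by
        rw [hM_def]
        rw [show (8:ℝ≥0∞) = 2 * 4 from by norm_num]
        ring


/-- eLpNorm at exponent 2 as a lintegral of squares -/
lemma eLpNorm_two (h : (Fin 3 → ℝ) → ℝ) :
    eLpNorm h 2 volume = (∫⁻ x, (‖h x‖₊ : ℝ≥0∞)^(2:ℕ))^(1/2:ℝ) := by
  rw [eLpNorm_eq_lintegral_rpow_enorm_toReal two_ne_zero ENNReal.ofNat_ne_top]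
  simp only [ENNReal.toReal_ofNat]
  congr 1
  refine lintegral_congr fun x => ?_
  rw [← ENNReal.rpow_natCast]
  norm_num
  rw [enorm_eq_nnnorm]

lemma memLp_Q_ne_top {h : (Fin 3 → ℝ) → ℝ} (hh : MemLp h 2 volume) :
    ∫⁻ x, (‖h x‖₊ : ℝ≥0∞)^(2:ℕ) ≠ ⊤ := by
  intro hc
  have h1 : eLpNorm h 2 volume ≠ ⊤ := hh.eLpNorm_ne_top
  rw [eLpNorm_two, hc] at h1
  exact h1 (ENNReal.top_rpow_of_pos (by norm_num))

/-- integration by parts in the third coordinate -/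
lemma ibp3 {u f : (Fin 3 → ℝ) → ℝ} (hu : ContDiff ℝ 3 u) (hf : ContDiff ℝ 2 f)
    (hfs : HasCompactSupport f) :
    ∫ x, pd 2 u x * (f x)^2 = -2 * ∫ x, u x * (f x * pd 2 f x) := by
  have hcu : Continuous u := hu.continuous
  have hcf : Continuous f := hf.continuous
  have hud : Differentiable ℝ u := hu.differentiable (by norm_num)
  have hfd : Differentiable ℝ f := hf.differentiable (by norm_num)
  have hpd2u : Continuous (pd 2 u) := (contDiff_pd hu 2).continuous
  have hpd2f : Continuous (pd 2 f) := (contDiff_pd' hf 2).continuous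
  have hf1 : ContDiff ℝ 1 f := hf.of_le (by norm_num)
  have hu1 : ContDiff ℝ 1 u := hu.of_le (by norm_num)
  -- compact support facts
  have hsq : HasCompactSupport (fun x => f x ^ 2) := by
    have h1 : HasCompactSupport (f * f) := hfs.mul_left
    have he : (fun x => f x ^ 2) = f * f := by funext x; simp [Pi.mul_apply, sq]
    rw [he]; exact h1
  have hI1 : Integrable (fun x => pd 2 u x * f x ^ 2) volume := by
    apply (hpd2u.mul (hcf.pow 2)).integrable_of_hasCompactSupport
    exact hsq.mul_left
  have hI2 : Integrable (fun x => u x * (2 * f x * pd 2 f x)) volume := by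
    apply (hcu.mul ((continuous_const.mul hcf).mul hpd2f)).integrable_of_hasCompactSupport
    have h1 : HasCompactSupport ((fun x => u x * 2) * (f * pd 2 f)) :=
      HasCompactSupport.mul_left hfs.mul_right
    have he : (fun x => u x * (2 * f x * pd 2 f x)) = (fun x => u x * 2) * (f * pd 2 f) := by
      funext x; simp [Pi.mul_apply]; ring
    exact HasCompactSupport.mul_left (HasCompactSupport.mul_right (HasCompactSupport.mul_left hfs))
  have hI2' : Integrable (fun x => u x * (f x * pd 2 f x)) volume := by
    apply (hcu.mul (hcf.mul hpd2f)).integrable_of_hasCompactSupport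
    exact HasCompactSupport.mul_left hfs.mul_right
  -- inner 1D integration by parts
  have h_inner : ∀ z : ℝ × ℝ,
      ∫ t, pd 2 u (mk3 z.1 z.2 t) * f (mk3 z.1 z.2 t) ^ 2
        = - ∫ t, u (mk3 z.1 z.2 t) * (2 * f (mk3 z.1 z.2 t) * pd 2 f (mk3 z.1 z.2 t)) := by
    intro z
    have hg : ContDiff ℝ 1 fun t => u (mk3 z.1 z.2 t) := contDiff_line2 hu1 z.1 z.2
    have hh : ContDiff ℝ 1 fun t => f (mk3 z.1 z.2 t) ^ 2 :=
      (contDiff_line2 hf1 z.1 z.2).pow 2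
    have hhs : HasCompactSupport fun t => f (mk3 z.1 z.2 t) ^ 2 := by
      have h1 : HasCompactSupport ((fun t => f (mk3 z.1 z.2 t)) * fun t => f (mk3 z.1 z.2 t)) :=
        (hcs_line2 hfs z.1 z.2).mul_left
      have he : (fun t => f (mk3 z.1 z.2 t) ^ 2)
          = (fun t => f (mk3 z.1 z.2 t)) * fun t => f (mk3 z.1 z.2 t) := by
        funext t; simp [Pi.mul_apply, sq]
      rw [he]; exact h1
    have hgd : deriv (fun t => u (mk3 z.1 z.2 t)) = fun t => pd 2 u (mk3 z.1 z.2 t) :=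
      funext fun t => (hasDerivAt_line2 hud z.1 z.2 t).deriv
    have hhd : deriv (fun t => f (mk3 z.1 z.2 t) ^ 2)
        = fun t => 2 * f (mk3 z.1 z.2 t) * pd 2 f (mk3 z.1 z.2 t) := by
      funext t
      have h1 : HasDerivAt (fun t => f (mk3 z.1 z.2 t) ^ 2)
          (2 * f (mk3 z.1 z.2 t) * pd 2 f (mk3 z.1 z.2 t)) t := by
        have := (hasDerivAt_line2 hfd z.1 z.2 t).fun_pow 2
        simpa [mul_assoc] using this
      exact h1.deriv
    have := oneD_ibp hg hh hhs
    rw [hgd, hhd] at this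
    exact this
  -- assemble by Fubini
  rw [int_slice2 _ hI1]
  have he1 : (fun z : ℝ × ℝ => ∫ t, pd 2 u (mk3 z.1 z.2 t) * f (mk3 z.1 z.2 t) ^ 2)
      = fun z : ℝ × ℝ =>
        - ∫ t, u (mk3 z.1 z.2 t) * (2 * f (mk3 z.1 z.2 t) * pd 2 f (mk3 z.1 z.2 t)) :=
    funext h_inner
  rw [he1, integral_neg]
  have e2 : ∫ (z : ℝ × ℝ), ∫ t, u (mk3 z.1 z.2 t)
        * (2 * f (mk3 z.1 z.2 t) * pd 2 f (mk3 z.1 z.2 t))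
      = ∫ x, u x * (2 * f x * pd 2 f x) := (int_slice2 _ hI2).symm
  rw [e2]
  have e3 : ∫ x, u x * (2 * f x * pd 2 f x) = 2 * ∫ x, u x * (f x * pd 2 f x) := by
    rw [← integral_const_mul]
    congr 1; funext x; ring
  rw [e3]; ring

end VVW

open VVW

/-- The term `∫ ∂₃u₃ · f²` is controlled, after integration by parts in `x₃`,
via the anisotropic quadrilinear estimate. -/
theorem vertical_velocity_weight_estimate :
    ∃ C > (0:ℝ), ∀ f u₃ : (Fin 3 → ℝ) → ℝ,
      ContDiff ℝ (⊤ : ℕ∞) f → HasCompactSupport f → ContDiff ℝ (⊤ : ℕ∞) u₃ →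
      MemLp u₃ 2 volume → MemLp (pd 0 u₃) 2 volume → MemLp (pd 1 u₃) 2 volume →
      MemLp (pd 0 (pd 1 u₃)) 2 volume →
      MemLp f 2 volume → MemLp (pd 2 f) 2 volume →
      |∫ x, pd 2 u₃ x * (f x) ^ 2| ≤
        C * (eLpNorm u₃ 2 volume).toReal ^ ((1:ℝ)/4) *
          (eLpNorm (pd 0 u₃) 2 volume).toReal ^ ((1:ℝ)/4) *
          (eLpNorm (pd 1 u₃) 2 volume).toReal ^ ((1:ℝ)/4) *
          (eLpNorm (pd 0 (pd 1 u₃)) 2 volume).toReal ^ ((1:ℝ)/4) *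
          (eLpNorm f 2 volume).toReal ^ ((1:ℝ)/2) *
          (eLpNorm (pd 2 f) 2 volume).toReal ^ ((3:ℝ)/2) := by
  refine ⟨8, by norm_num, ?_⟩
  intro f u₃ hf hfs hu hMu hM0 hM1 hM01 hMf hM2f
  have hu3 : ContDiff ℝ 3 u₃ := hu.of_le (WithTop.coe_le_coe.mpr (le_top : (3:ℕ∞) ≤ ⊤))
  have hf2 : ContDiff ℝ 2 f := hf.of_le (WithTop.coe_le_coe.mpr (le_top : (2:ℕ∞) ≤ ⊤))
  have hcomm : pd 0 (pd 1 u₃) = pd 1 (pd 0 u₃) := pd_comm hu3 0 1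
  rw [hcomm]
  have hM01' : MemLp (pd 1 (pd 0 u₃)) 2 volume := by rw [← hcomm]; exact hM01
  -- finiteness of the squared integrals
  have hQu := memLp_Q_ne_top hMu
  have hQ0 := memLp_Q_ne_top hM0
  have hQ1 := memLp_Q_ne_top hM1
  have hQ01 := memLp_Q_ne_top hM01'
  have hQf := memLp_Q_ne_top hMf
  have hQ2f := memLp_Q_ne_top hM2f
  -- continuity
  have hcu : Continuous u₃ := hu3.continuous
  have hcf : Continuous f := hf2.continuous
  have hpd2f : Continuous (pd 2 f) := (contDiff_pd' hf2 2).continuous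
  -- abbreviations
  set Qu := ∫⁻ x, (‖u₃ x‖₊ : ℝ≥0∞)^(2:ℕ) with hQu_def
  set Q0 := ∫⁻ x, (‖pd 0 u₃ x‖₊ : ℝ≥0∞)^(2:ℕ) with hQ0_def
  set Q1 := ∫⁻ x, (‖pd 1 u₃ x‖₊ : ℝ≥0∞)^(2:ℕ) with hQ1_def
  set Q01 := ∫⁻ x, (‖pd 1 (pd 0 u₃) x‖₊ : ℝ≥0∞)^(2:ℕ) with hQ01_def
  set Qf := ∫⁻ x, (‖f x‖₊ : ℝ≥0∞)^(2:ℕ) with hQf_def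
  set Q2f := ∫⁻ x, (‖pd 2 f x‖₊ : ℝ≥0∞)^(2:ℕ) with hQ2f_def
  set T := ∫⁻ x, (‖u₃ x * (f x * pd 2 f x)‖₊ : ℝ≥0∞) with hT_def
  set D : ℝ≥0∞ := 4 * Qu^(1/8:ℝ) * Q0^(1/8:ℝ) * Q1^(1/8:ℝ) * Q01^(1/8:ℝ)
    * Qf^(1/4:ℝ) * Q2f^(3/4:ℝ) with hD_def
  have key := key_P hu3 hf2 hfs hQu hQ0 hQ1 hQ01
  -- measurability
  have muf : Measurable fun x : Fin 3 → ℝ => (‖u₃ x * f x‖₊ : ℝ≥0∞) :=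
    (hcu.mul hcf).nnnorm.measurable.coe_nnreal_ennreal
  have m2f : Measurable fun x : Fin 3 → ℝ => (‖pd 2 f x‖₊ : ℝ≥0∞) :=
    hpd2f.nnnorm.measurable.coe_nnreal_ennreal
  -- the ENNReal bound T ≤ D
  have h8 : (8:ℝ≥0∞)^(1/2:ℝ) ≤ 4 := by
    calc (8:ℝ≥0∞)^(1/2:ℝ) ≤ (16:ℝ≥0∞)^(1/2:ℝ) :=
          ENNReal.rpow_le_rpow (by norm_num) (by norm_num)
      _ = 4 := by
          rw [show (16:ℝ≥0∞) = (4:ℝ≥0∞)^(2:ℕ) from by norm_num,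
            ← ENNReal.rpow_natCast, ← ENNReal.rpow_mul]
          norm_num
  have hTD : T ≤ D := by
    have e0 : ∀ X : ℝ≥0∞, (X^(1/4:ℝ))^(1/2:ℝ) = X^(1/8:ℝ) := fun X => by
      rw [← ENNReal.rpow_mul]; norm_num
    have e0' : ∀ X : ℝ≥0∞, (X^(1/2:ℝ))^(1/2:ℝ) = X^(1/4:ℝ) := fun X => by
      rw [← ENNReal.rpow_mul]; norm_num
    calc T = ∫⁻ x, (‖u₃ x * f x‖₊ : ℝ≥0∞) * (‖pd 2 f x‖₊ : ℝ≥0∞) := by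
          rw [hT_def]
          refine lintegral_congr fun x => ?_
          rw [show u₃ x * (f x * pd 2 f x) = (u₃ x * f x) * pd 2 f x from by ring, enn_mul]
      _ ≤ (∫⁻ x, (‖u₃ x * f x‖₊ : ℝ≥0∞)^(2:ℕ))^(1/2:ℝ) * Q2f^(1/2:ℝ) :=
          lint_CS volume muf.aemeasurable m2f.aemeasurable
      _ ≤ (8 * Qu^(1/4:ℝ) * Q0^(1/4:ℝ) * Q1^(1/4:ℝ) * Q01^(1/4:ℝ)
            * Qf^(1/2:ℝ) * Q2f^(1/2:ℝ))^(1/2:ℝ) * Q2f^(1/2:ℝ) :=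
          mul_le_mul_left (ENNReal.rpow_le_rpow key (by norm_num)) _
      _ = (8:ℝ≥0∞)^(1/2:ℝ) * Qu^(1/8:ℝ) * Q0^(1/8:ℝ) * Q1^(1/8:ℝ) * Q01^(1/8:ℝ)
            * Qf^(1/4:ℝ) * (Q2f^(1/4:ℝ) * Q2f^(1/2:ℝ)) := by
          rw [ENNReal.mul_rpow_of_nonneg _ _ (by norm_num : (0:ℝ) ≤ 1/2),
            ENNReal.mul_rpow_of_nonneg _ _ (by norm_num : (0:ℝ) ≤ 1/2),
            ENNReal.mul_rpow_of_nonneg _ _ (by norm_num : (0:ℝ) ≤ 1/2),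
            ENNReal.mul_rpow_of_nonneg _ _ (by norm_num : (0:ℝ) ≤ 1/2),
            ENNReal.mul_rpow_of_nonneg _ _ (by norm_num : (0:ℝ) ≤ 1/2),
            ENNReal.mul_rpow_of_nonneg _ _ (by norm_num : (0:ℝ) ≤ 1/2),
            e0, e0, e0, e0, e0', e0']
          ring
      _ = (8:ℝ≥0∞)^(1/2:ℝ) * Qu^(1/8:ℝ) * Q0^(1/8:ℝ) * Q1^(1/8:ℝ) * Q01^(1/8:ℝ)
            * Qf^(1/4:ℝ) * Q2f^(3/4:ℝ) := by
          rw [← ENNReal.rpow_add_of_nonneg (x := Q2f) (1/4:ℝ) (1/2:ℝ) (by norm_num) (by norm_num)]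
          norm_num
      _ ≤ D := by
          rw [hD_def]
          exact mul_le_mul_left (mul_le_mul_left (mul_le_mul_left (mul_le_mul_left
            (mul_le_mul_left (mul_le_mul_left h8 _) _) _) _) _) _
  have hDne : D ≠ ⊤ := by
    rw [hD_def]
    refine ENNReal.mul_ne_top (ENNReal.mul_ne_top (ENNReal.mul_ne_top (ENNReal.mul_ne_top
      (ENNReal.mul_ne_top (ENNReal.mul_ne_top (by norm_num)
        (ENNReal.rpow_ne_top_of_nonneg (by norm_num) hQu))
        (ENNReal.rpow_ne_top_of_nonneg (by norm_num) hQ0))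
        (ENNReal.rpow_ne_top_of_nonneg (by norm_num) hQ1))
        (ENNReal.rpow_ne_top_of_nonneg (by norm_num) hQ01))
        (ENNReal.rpow_ne_top_of_nonneg (by norm_num) hQf))
        (ENNReal.rpow_ne_top_of_nonneg (by norm_num) hQ2f)
  -- the real-variable side
  rw [ibp3 hu3 hf2 hfs]
  have hInt : Integrable (fun x => u₃ x * (f x * pd 2 f x)) volume :=
    (hcu.mul (hcf.mul hpd2f)).integrable_of_hasCompactSupport
      (HasCompactSupport.mul_left hfs.mul_right)
  have habs : |(-2 : ℝ) * ∫ x, u₃ x * (f x * pd 2 f x)|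
      = 2 * |∫ x, u₃ x * (f x * pd 2 f x)| := by
    rw [abs_mul]; norm_num
  have h1 : |∫ x, u₃ x * (f x * pd 2 f x)| ≤ ∫ x, |u₃ x * (f x * pd 2 f x)| := by
    have := norm_integral_le_integral_norm (f := fun x => u₃ x * (f x * pd 2 f x))
      (μ := (volume : Measure (Fin 3 → ℝ)))
    simpa only [Real.norm_eq_abs] using this
  have h2 : ∫ x, |u₃ x * (f x * pd 2 f x)| = T.toReal := by
    have := integral_norm_eq_lintegral_enorm
      (f := fun x => u₃ x * (f x * pd 2 f x)) (μ := (volume : Measure (Fin 3 → ℝ)))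
      ((hcu.mul (hcf.mul hpd2f)).aestronglyMeasurable)
    rw [hT_def]
    simpa only [Real.norm_eq_abs, enorm_eq_nnnorm] using this
  -- identify the eLpNorm powers
  have eN : ∀ (h : (Fin 3 → ℝ) → ℝ) (r : ℝ), 0 ≤ r →
      (eLpNorm h 2 volume).toReal ^ r = ((∫⁻ x, (‖h x‖₊ : ℝ≥0∞)^(2:ℕ))^((1/2) * r : ℝ)).toReal := by
    intro h r hr
    rw [eLpNorm_two h, ENNReal.toReal_rpow, ← ENNReal.rpow_mul]
  calc |(-2 : ℝ) * ∫ x, u₃ x * (f x * pd 2 f x)|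
      = 2 * |∫ x, u₃ x * (f x * pd 2 f x)| := habs
    _ ≤ 2 * T.toReal := by
        have := h1.trans (le_of_eq h2)
        linarith
    _ ≤ 2 * D.toReal := by
        have := ENNReal.toReal_mono hDne hTD
        linarith
    _ = 8 * (eLpNorm u₃ 2 volume).toReal ^ ((1:ℝ)/4) *
          (eLpNorm (pd 0 u₃) 2 volume).toReal ^ ((1:ℝ)/4) *
          (eLpNorm (pd 1 u₃) 2 volume).toReal ^ ((1:ℝ)/4) *
          (eLpNorm (pd 1 (pd 0 u₃)) 2 volume).toReal ^ ((1:ℝ)/4) *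
          (eLpNorm f 2 volume).toReal ^ ((1:ℝ)/2) *
          (eLpNorm (pd 2 f) 2 volume).toReal ^ ((3:ℝ)/2) := by
        rw [eN u₃ ((1:ℝ)/4) (by norm_num), eN (pd 0 u₃) ((1:ℝ)/4) (by norm_num),
          eN (pd 1 u₃) ((1:ℝ)/4) (by norm_num), eN (pd 1 (pd 0 u₃)) ((1:ℝ)/4) (by norm_num),
          eN f ((1:ℝ)/2) (by norm_num), eN (pd 2 f) ((3:ℝ)/2) (by norm_num)]
        rw [hD_def]
        simp only [ENNReal.toReal_mul]
        norm_num
        ring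
end
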